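/- arXiv:1409.8219 — 7 statements merged into one kernel-verified Lean document; each statement's English description precedes it below -/
import Mathlib

section
/- Let n ∈ ℕ and let (M_i)_{i=0,…,n} be a martingale with respect to a filtration (F_i)_{i=0,…,n} such that 0 ≤ M_i ≤ 1 a.s. for every i. Then P(M_i > 0 for all i ∈ {0,…,n}) ≥ E[M_0]. -/
/-!
A `[0,1]`-valued martingale is absorbed at `0`: on `{M_i ≤ 0}` the terminal value `M_n ≥ 0` has
integral `∫ M_i ≤ 0`, so it vanishes there. Hence `M_n ≤ 1` vanishes off `{∀ i, M_i > 0}`, and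
`E[M_0] = E[M_n] ≤ P(∀ i, M_i > 0)`.
-/

open MeasureTheory

namespace MeasureTheory.Martingale

variable {Ω ι : Type*} {m0 : MeasurableSpace Ω} {μ : Measure Ω} [Preorder ι]
  {ℱ : Filtration ι m0} {f : ι → Ω → ℝ} [SigmaFiniteFiltration μ ℱ]

theorem integral_eq (hf : Martingale f ℱ μ) {i j : ι} (hij : i ≤ j) :
    ∫ ω, f i ω ∂μ = ∫ ω, f j ω ∂μ := by
  simpa only [Measure.restrict_univ] using hf.setIntegral_eq hij MeasurableSet.univ

theorem ae_eq_zero_of_nonpos (hf : Martingale f ℱ μ) {i j : ι} (hij : i ≤ j)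
    (hj : 0 ≤ᵐ[μ] f j) : ∀ᵐ ω ∂μ, f i ω ≤ 0 → f j ω = 0 := by
  have hs : MeasurableSet[ℱ i] {ω | f i ω ≤ 0} :=
    measurableSet_le (hf.stronglyAdapted i).measurable measurable_const
  have hj' : 0 ≤ᵐ[μ.restrict {ω | f i ω ≤ 0}] f j := ae_restrict_of_ae hj
  have hzero : ∫ ω in {ω | f i ω ≤ 0}, f j ω ∂μ = 0 := by
    refine le_antisymm ?_ (setIntegral_nonneg_of_ae_restrict hj')
    rw [← hf.setIntegral_eq hij hs]
    exact setIntegral_nonpos (ℱ.le i _ hs) fun _ h => h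
  exact (ae_restrict_iff' (ℱ.le i _ hs)).mp
    ((setIntegral_eq_zero_iff_of_nonneg_ae hj' (hf.integrable j).integrableOn).mp hzero)

theorem integral_le_measureReal_forall_pos [Countable ι] [IsFiniteMeasure μ]
    (hf : Martingale f ℱ μ) {j : ι} (hj : ∀ i, i ≤ j) (hnonneg : 0 ≤ᵐ[μ] f j)
    (hle : ∀ᵐ ω ∂μ, f j ω ≤ 1) : ∫ ω, f j ω ∂μ ≤ μ.real {ω | ∀ i, 0 < f i ω} := by
  set A := {ω | ∀ i, 0 < f i ω}
  have hA : MeasurableSet A := by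
    simp only [A, Set.ofPred_forall]
    exact MeasurableSet.iInter fun i =>
      measurableSet_lt measurable_const ((hf.stronglyAdapted i).measurable.mono (ℱ.le i) le_rfl)
  have hbound : f j ≤ᵐ[μ] A.indicator 1 := by
    filter_upwards [ae_all_iff.mpr fun i => hf.ae_eq_zero_of_nonpos (hj i) hnonneg, hle]
      with ω habsorbed hω
    by_cases hωA : ω ∈ A
    · simpa [hωA] using hω
    · obtain ⟨i, hi⟩ : ∃ i, f i ω ≤ 0 := by simpa [A] using hωA
      simp [hωA, habsorbed i hi]
  calc ∫ ω, f j ω ∂μ ≤ ∫ ω, A.indicator 1 ω ∂μ :=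
        integral_mono_ae (hf.integrable j) ((integrable_const 1).indicator hA) hbound
    _ = μ.real A := integral_indicator_one hA

end MeasureTheory.Martingale

/-- For a `[0,1]`-valued martingale `(M_i)_{i=0,…,n}`,
`P(M_i > 0 for all i) ≥ E[M_0]`. -/
theorem prob_pos_ge_expectation_of_martingale_in_unit_interval
    {Ω : Type*} {m0 : MeasurableSpace Ω} {μ : Measure Ω} [IsProbabilityMeasure μ]
    (n : ℕ) (ℱ : Filtration (Fin (n + 1)) m0) (M : Fin (n + 1) → Ω → ℝ)
    (hM : Martingale M ℱ μ)
    (h01 : ∀ i, ∀ᵐ ω ∂μ, 0 ≤ M i ω ∧ M i ω ≤ 1) :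
    ENNReal.ofReal (∫ ω, M 0 ω ∂μ) ≤ μ {ω | ∀ i, 0 < M i ω} := by
  rw [hM.integral_eq (Fin.zero_le (Fin.last n)), ← ofReal_measureReal]
  exact ENNReal.ofReal_le_ofReal <| hM.integral_le_measureReal_forall_pos Fin.le_last
    ((h01 _).mono fun _ h => h.1) ((h01 _).mono fun _ h => h.2)
end

section
/- Let L ≥ 0, p₁ ∈ [0,1], and let f : ℝ → (-∞,∞] be a non-decreasing convex function with f(0) = 0, f(p) ≥ ℓ_L(p) for every p ≥ p₁, and f(p) ≤ ℓ_L(p) for every p ≤ p₁. Set q₁ := L/p₁ if p₁ > 0 and q₁ := 0 otherwise. Then for every q ≥ 0: (f ∨ ℓ_L)^♯(q) = p₁·max(q − q₁, 0) if q ≤ D⁺f(p₁), and (f ∨ ℓ_L)^♯(q) = f^♯(q) if q > D⁺f(p₁) (when D⁺f(p₁) = +∞ the first formula holds for all q ≥ 0). Moreover (f ∨ ℓ_L)^♯ is a closed proper convex function; in particular it is continuous at q = D⁺f(p₁) whenever 0 < D⁺f(p₁) < +∞. -/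
open scoped Classical
noncomputable section

/-- Fenchel conjugate (Legendre transform) of an extended-real-valued function:
`fconj f q = sup_{p ∈ ℝ} (p*q - f p)`. -/
def fconj (f : ℝ → EReal) (q : ℝ) : EReal := ⨆ p : ℝ, ((p * q : ℝ) : EReal) - f p

/-- Convexity for extended-real-valued functions on `ℝ`. -/
def ConvexE (f : ℝ → EReal) : Prop :=
  ∀ x y t : ℝ, 0 ≤ t → t ≤ 1 →
    f (t * x + (1 - t) * y) ≤ (t : EReal) * f x + ((1 - t : ℝ) : EReal) * f y

/-- The payoff function `ℓ_L`: `0` for `p ≤ 0`, `L` for `0 < p ≤ 1`, `+∞` for `p > 1`. -/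
def ellL (L : ℝ) (p : ℝ) : EReal :=
  if p ≤ 0 then 0 else if p ≤ 1 then (L : EReal) else ⊤

/-- Right derivative (as an extended real) of `f` at `p`, i.e. the infimum of the
right slopes `(f (p+h) - f p)/h` over `h > 0`. -/
def rightDE (f : ℝ → EReal) (p : ℝ) : EReal :=
  ⨅ h : {h : ℝ // 0 < h}, ((h.1⁻¹ : ℝ) : EReal) * (f (p + h.1) - f p)

/-- Left derivative (as an extended real) of `f` at `p`, i.e. the supremum of the
left slopes `(f p - f (p-h))/h` over `h > 0`. -/
def leftDE (f : ℝ → EReal) (p : ℝ) : EReal :=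
  ⨆ h : {h : ℝ // 0 < h}, ((h.1⁻¹ : ℝ) : EReal) * (f p - f (p - h.1))

/-- Closed convex envelope of `f`: the pointwise supremum of all lower semicontinuous
convex minorants of `f` (the largest closed convex function majorized by `f`). -/
def coE (f : ℝ → EReal) (p : ℝ) : EReal :=
  ⨆ g : {g : ℝ → EReal // ConvexE g ∧ LowerSemicontinuous g ∧ ∀ x, g x ≤ f x}, g.1 p

/-- Subdifferential of an extended-real-valued function at a point. -/
def subdiffE (f : ℝ → EReal) (p : ℝ) : Set ℝ :=
  {q : ℝ | ∀ r : ℝ, f p + ((q * (r - p) : ℝ) : EReal) ≤ f r}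

/-!
Write `g = f ∨ ℓ_L`. Since `f ≤ ℓ_L` left of `p₁` and `ℓ_L ≤ f` right of it, `g` is `ℓ_L` on
`(-∞, p₁]`, `f` on `[p₁, ∞)`, and `g p₁ = f p₁ = p₁ q₁`. If `q ≤ D⁺f(p₁)`, the line of slope `q`
through `(p₁, p₁ q₁)` lies below `f` to the right of `p₁`, so the supremum defining `g^♯(q)` is
attained at `p = 0` or `p = p₁`. If `q > D⁺f(p₁)`, some chord of `f` starting at `p₁` has slope
below `q`, and convexity puts `f` above that line to the left of `p₁`. So for `p < p₁`, where
`f` and `g` may differ, `p q - f p ≤ p₁ q - g p₁`, and both conjugates are suprema over `p ≥ p₁`.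
Finally `0 ≤ g^♯(q) ≤ (q - L)⁺` for `q ≥ 0`, so the convex function `g^♯` is finite, hence
continuous, on `(0, ∞)`.
-/

section Conjugate

variable {φ ψ : ℝ → EReal}

theorem ConvexE.iSup {ι : Sort*} {Φ : ι → ℝ → EReal} (hΦ : ∀ i, ConvexE (Φ i)) :
    ConvexE fun x => ⨆ i, Φ i x := by
  intro x y t ht ht1
  refine iSup_le fun i => (hΦ i x y t ht ht1).trans (add_le_add ?_ ?_)
  · exact mul_le_mul_of_nonneg_left (le_iSup (Φ · x) i) (by exact_mod_cast ht)
  · exact mul_le_mul_of_nonneg_left (le_iSup (Φ · y) i) (by exact_mod_cast sub_nonneg.2 ht1)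

theorem convexE_coe_mul_sub (p : ℝ) (c : EReal) : ConvexE fun q => ((p * q : ℝ) : EReal) - c := by
  intro x y t ht ht1
  induction c using EReal.rec with
  | bot =>
    simp only [EReal.coe_sub_bot, top_le_iff]
    rcases ht.eq_or_lt with rfl | ht0
    · simp
    · rw [EReal.coe_mul_top_of_pos ht0, EReal.top_add_of_ne_bot]
      exact (EReal.mul_nonneg (by exact_mod_cast sub_nonneg.2 ht1) le_top).trans_lt'
        EReal.bot_lt_zero |>.ne'
  | coe r =>
    simp only [← EReal.coe_sub, ← EReal.coe_mul, ← EReal.coe_add, EReal.coe_le_coe_iff]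
    exact le_of_eq (by ring)
  | top => simp

theorem fconj_convexE (φ : ℝ → EReal) : ConvexE (fconj φ) :=
  ConvexE.iSup fun p => convexE_coe_mul_sub p (φ p)

theorem lowerSemicontinuous_coe_mul_sub (p : ℝ) (c : EReal) :
    LowerSemicontinuous fun q => ((p * q : ℝ) : EReal) - c := by
  induction c using EReal.rec with
  | bot => simpa only [EReal.coe_sub_bot] using lowerSemicontinuous_const
  | coe r =>
    simp_rw [← EReal.coe_sub]
    exact (continuous_coe_real_ereal.comp (by fun_prop)).lowerSemicontinuous
  | top => simpa only [EReal.sub_top] using lowerSemicontinuous_const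

theorem fconj_lowerSemicontinuous (φ : ℝ → EReal) : LowerSemicontinuous (fconj φ) :=
  lowerSemicontinuous_iSup fun p => lowerSemicontinuous_coe_mul_sub p (φ p)

theorem fconj_anti (h : φ ≤ ψ) (q : ℝ) : fconj ψ q ≤ fconj φ q :=
  iSup_mono fun p => EReal.sub_le_sub le_rfl (h p)

theorem zero_le_fconj (h0 : φ 0 ≤ 0) (q : ℝ) : 0 ≤ fconj φ q :=
  le_iSup_of_le 0 <| by simpa using h0

theorem ConvexE.convexOn_toReal (hφ : ConvexE φ) {s : Set ℝ} (hs : Convex ℝ s)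
    (hfin : ∀ x ∈ s, φ x ≠ ⊥ ∧ φ x ≠ ⊤) : ConvexOn ℝ s fun x => (φ x).toReal := by
  have hcoe : ∀ x ∈ s, φ x = ((φ x).toReal : EReal) := fun x hx =>
    (EReal.coe_toReal (hfin x hx).2 (hfin x hx).1).symm
  refine ⟨hs, fun x hx y hy a b ha hb hab => ?_⟩
  have h := hφ x y a ha (by linarith)
  have hxy : a * x + b * y ∈ s := hs hx hy ha hb hab
  rw [show 1 - a = b by linarith, hcoe _ hxy, hcoe x hx, hcoe y hy] at h
  simp only [smul_eq_mul]
  exact_mod_cast h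

theorem ConvexE.continuousOn (hφ : ConvexE φ) {s : Set ℝ} (hso : IsOpen s) (hs : Convex ℝ s)
    (hfin : ∀ x ∈ s, φ x ≠ ⊥ ∧ φ x ≠ ⊤) : ContinuousOn φ s :=
  (continuous_coe_real_ereal.comp_continuousOn
    ((hφ.convexOn_toReal hs hfin).continuousOn hso)).congr fun x hx =>
      (EReal.coe_toReal (hfin x hx).2 (hfin x hx).1).symm

end Conjugate

section RightDerivative

variable {f : ℝ → EReal}

theorem coe_le_inv_mul_sub_iff {h : ℝ} (hh : 0 < h) (a q : ℝ) (y : EReal) :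
    (q : EReal) ≤ ((h⁻¹ : ℝ) : EReal) * (y - a) ↔ ((a + q * h : ℝ) : EReal) ≤ y := by
  induction y using EReal.rec with
  | bot =>
    simp only [EReal.bot_sub, EReal.coe_mul_bot_of_pos (inv_pos.2 hh), le_bot_iff,
      EReal.coe_ne_bot]
  | coe y =>
    rw [← EReal.coe_sub, ← EReal.coe_mul, EReal.coe_le_coe_iff, EReal.coe_le_coe_iff,
      le_inv_mul_iff₀ hh]
    constructor <;> intro <;> linarith
  | top => simp [EReal.coe_mul_top_of_pos (inv_pos.2 hh)]

theorem coe_le_rightDE_iff {x a : ℝ} (hx : f x = a) (q : ℝ) :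
    (q : EReal) ≤ rightDE f x ↔ ∀ h : ℝ, 0 < h → ((a + q * h : ℝ) : EReal) ≤ f (x + h) := by
  simp only [rightDE, le_iInf_iff, Subtype.forall, hx]
  exact forall₂_congr fun h hh => coe_le_inv_mul_sub_iff hh a q _

theorem ConvexE.affine_le_of_le_affine (hf : ConvexE f) {x r a q : ℝ} (hx : f x = a)
    (hxr : x < r) (hr : f r ≤ ((a + q * (r - x) : ℝ) : EReal)) {p : ℝ} (hpx : p < x) :
    ((a + q * (p - x) : ℝ) : EReal) ≤ f p := by
  set t := (r - x) / (r - p)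
  have ht0 : 0 < t := div_pos (by linarith) (by linarith)
  have ht1 : t < 1 := (div_lt_one (by linarith)).2 (by linarith)
  have hcomb : t * p + (1 - t) * r = x := by
    simp only [t]
    field_simp [show r - p ≠ 0 by linarith]
    ring
  have hr' : ((1 - t : ℝ) : EReal) * f r ≤ (((1 - t) * (a + q * (r - x)) : ℝ) : EReal) := by
    rw [EReal.coe_mul]
    exact mul_le_mul_of_nonneg_left hr (by exact_mod_cast (sub_pos.2 ht1).le)
  have hconv := (hf p r t ht0.le ht1.le).trans (add_le_add le_rfl hr')
  rw [hcomb, hx] at hconv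
  generalize f p = y at hconv ⊢
  induction y using EReal.rec with
  | bot =>
    rw [EReal.coe_mul_bot_of_pos ht0, EReal.bot_add] at hconv
    exact absurd hconv (by simp)
  | coe b =>
    rw [← EReal.coe_mul, ← EReal.coe_add, EReal.coe_le_coe_iff] at hconv
    have key : t * (a + q * (p - x)) ≤ t * b := by linear_combination hconv + q * hcomb
    exact EReal.coe_le_coe_iff.2 (le_of_mul_le_mul_left key ht0)
  | top => exact le_top

theorem ConvexE.affine_le_of_rightDE_lt (hf : ConvexE f) {x a q : ℝ} (hx : f x = a)
    (hq : rightDE f x < q) {p : ℝ} (hpx : p < x) : ((a + q * (p - x) : ℝ) : EReal) ≤ f p := by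
  obtain ⟨h, hh, hlt⟩ : ∃ h : ℝ, 0 < h ∧ f (x + h) < ((a + q * h : ℝ) : EReal) := by
    have := (coe_le_rightDE_iff hx q).not.1 (not_le.2 hq)
    push Not at this
    exact this
  refine hf.affine_le_of_le_affine hx (lt_add_of_pos_right x hh) ?_ hpx
  rw [add_sub_cancel_left]
  exact hlt.le

end RightDerivative

theorem fconj_max_eq_fconj_of_rightDE_lt {f ℓ : ℝ → EReal} (hf : ConvexE f) {x a q : ℝ}
    (hx : f x = a) (hℓ : ∀ p, x ≤ p → ℓ p ≤ f p) (hq : rightDE f x < q) :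
    fconj (fun p => max (f p) (ℓ p)) q = fconj f q := by
  refine le_antisymm (fconj_anti (fun p => le_max_left _ _) q) (iSup_le fun p => ?_)
  rcases le_or_gt x p with hxp | hpx
  · exact le_iSup_of_le p (by dsimp only; rw [max_eq_left (hℓ p hxp)])
  · refine le_iSup_of_le x ?_
    calc ((p * q : ℝ) : EReal) - f p
        ≤ ((p * q : ℝ) : EReal) - ((a + q * (p - x) : ℝ) : EReal) :=
          EReal.sub_le_sub le_rfl (hf.affine_le_of_rightDE_lt hx hq hpx)
      _ = ((x * q : ℝ) : EReal) - max (f x) (ℓ x) := by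
          rw [max_eq_left (hℓ x le_rfl), hx, ← EReal.coe_sub, ← EReal.coe_sub]
          ring_nf

section Payoff

variable {L p q : ℝ}

theorem ellL_of_nonpos (hp : p ≤ 0) : ellL L p = 0 := if_pos hp

theorem ellL_of_pos_of_le_one (h0 : 0 < p) (h1 : p ≤ 1) : ellL L p = L := by
  rw [ellL, if_neg h0.not_ge, if_pos h1]

theorem ellL_of_one_lt (h1 : 1 < p) : ellL L p = ⊤ := by
  rw [ellL, if_neg (by linarith), if_neg h1.not_ge]

theorem fconj_ellL_le (hq : 0 ≤ q) : fconj (ellL L) q ≤ ((max (q - L) 0 : ℝ) : EReal) := by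
  refine iSup_le fun p => ?_
  rcases le_or_gt p 0 with hp0 | hp0
  · rw [ellL_of_nonpos hp0, sub_zero, EReal.coe_le_coe_iff]
    exact (mul_nonpos_of_nonpos_of_nonneg hp0 hq).trans (le_max_right _ _)
  rcases le_or_gt p 1 with hp1 | hp1
  · rw [ellL_of_pos_of_le_one hp0 hp1, ← EReal.coe_sub, EReal.coe_le_coe_iff]
    exact le_max_of_le_left (by nlinarith)
  · rw [ellL_of_one_lt hp1, EReal.sub_top]
    exact bot_le

theorem coe_mul_sub_ellL_le {x : ℝ} (hx : x ≤ 1) (hq : 0 ≤ q) (hpx : p ≤ x) :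
    ((p * q : ℝ) : EReal) - ellL L p ≤ max (((x * q : ℝ) : EReal) - ellL L x) 0 := by
  rcases le_or_gt p 0 with hp0 | hp0
  · rw [ellL_of_nonpos hp0, sub_zero]
    exact le_max_of_le_right (by exact_mod_cast mul_nonpos_of_nonpos_of_nonneg hp0 hq)
  · rw [ellL_of_pos_of_le_one hp0 (hpx.trans hx), ellL_of_pos_of_le_one (hp0.trans_le hpx) hx]
    exact le_max_of_le_left (EReal.sub_le_sub (by exact_mod_cast by nlinarith) le_rfl)

theorem fconj_max_ellL_of_le_rightDE {f : ℝ → EReal} {x a : ℝ} (hx0 : 0 ≤ x) (hx1 : x ≤ 1)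
    (hfx : f x = a) (hℓx : ellL L x = a) (hle : ∀ p, p ≤ x → f p ≤ ellL L p) (hq0 : 0 ≤ q)
    (hq : q ≤ rightDE f x) :
    fconj (fun p => max (f p) (ellL L p)) q = ((max (x * q - a) 0 : ℝ) : EReal) := by
  have hg : ∀ p, p ≤ x → max (f p) (ellL L p) = ellL L p := fun p hp => max_eq_right (hle p hp)
  refine le_antisymm (iSup_le fun p => ?_) ?_
  · rcases le_or_gt p x with hpx | hxp
    · dsimp only
      rw [hg p hpx]
      calc ((p * q : ℝ) : EReal) - ellL L p ≤ max (((x * q : ℝ) : EReal) - ellL L x) 0 :=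
            coe_mul_sub_ellL_le hx1 hq0 hpx
        _ = _ := by rw [hℓx, ← EReal.coe_sub, EReal.coe_strictMono.monotone.map_max]; rfl
    · have hfp : ((a + q * (p - x) : ℝ) : EReal) ≤ f p := by
        simpa using (coe_le_rightDE_iff hfx q).1 hq (p - x) (by linarith)
      calc ((p * q : ℝ) : EReal) - max (f p) (ellL L p)
          ≤ ((p * q : ℝ) : EReal) - ((a + q * (p - x) : ℝ) : EReal) :=
            EReal.sub_le_sub le_rfl (hfp.trans (le_max_left _ _))
        _ = ((x * q - a : ℝ) : EReal) := by rw [← EReal.coe_sub]; ring_nf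
        _ ≤ _ := by exact_mod_cast le_max_left _ _
  · rw [EReal.coe_strictMono.monotone.map_max]
    refine max_le (le_iSup_of_le x ?_) (le_iSup_of_le 0 ?_)
    · dsimp only
      rw [hg x le_rfl, hℓx, EReal.coe_sub]
    · dsimp only
      rw [hg 0 hx0, ellL_of_nonpos le_rfl]
      simp

end Payoff

theorem conj_max_ellL_formula_general
    (L : ℝ) (p₁ : ℝ) (hp₁0 : 0 ≤ p₁) (hp₁1 : p₁ ≤ 1)
    (f : ℝ → EReal) (hconv : ConvexE f)
    (hge : ∀ p : ℝ, p₁ ≤ p → ellL L p ≤ f p)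
    (hle : ∀ p : ℝ, p ≤ p₁ → f p ≤ ellL L p)
    (q₁ : ℝ) (hq₁ : q₁ = if 0 < p₁ then L / p₁ else 0) :
    (∀ q : ℝ, 0 ≤ q →
      ((q : EReal) ≤ rightDE f p₁ →
        fconj (fun p => max (f p) (ellL L p)) q = ((p₁ * max (q - q₁) 0 : ℝ) : EReal)) ∧
      (rightDE f p₁ < (q : EReal) →
        fconj (fun p => max (f p) (ellL L p)) q = fconj f q)) ∧
    ConvexE (fconj (fun p => max (f p) (ellL L p))) ∧
    LowerSemicontinuous (fconj (fun p => max (f p) (ellL L p))) ∧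
    (∀ q : ℝ, fconj (fun p => max (f p) (ellL L p)) q ≠ ⊥) ∧
    (∃ q : ℝ, fconj (fun p => max (f p) (ellL L p)) q ≠ ⊤) ∧
    (∀ c : ℝ, 0 < c → rightDE f p₁ = (c : EReal) →
      ContinuousAt (fconj (fun p => max (f p) (ellL L p))) c) := by
  set g : ℝ → EReal := fun p => max (f p) (ellL L p)
  have hℓp₁ : ellL L p₁ = ((p₁ * q₁ : ℝ) : EReal) := by
    rcases hp₁0.eq_or_lt with rfl | hp₁
    · simp [ellL_of_nonpos]
    · rw [hq₁, if_pos hp₁, mul_div_cancel₀ _ hp₁.ne', ellL_of_pos_of_le_one hp₁ hp₁1]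
  have hfp₁ : f p₁ = ((p₁ * q₁ : ℝ) : EReal) :=
    hℓp₁ ▸ le_antisymm (hle p₁ le_rfl) (hge p₁ le_rfl)
  have hne_bot : ∀ q, fconj g q ≠ ⊥ := fun q =>
    (EReal.bot_lt_zero.trans_le
      (zero_le_fconj (by simp [g, max_eq_right (hle 0 hp₁0), ellL_of_nonpos]) q)).ne'
  have hfinite : ∀ q, 0 ≤ q → fconj g q ≠ ⊤ := fun q hq =>
    ((fconj_anti (fun p => le_max_right _ _) q).trans (fconj_ellL_le hq)).trans_lt
      (EReal.coe_lt_top _) |>.ne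
  refine ⟨fun q hq => ⟨fun hqD => ?_, fconj_max_eq_fconj_of_rightDE_lt hconv hfp₁ hge⟩,
    fconj_convexE g, fconj_lowerSemicontinuous g,
    hne_bot, ⟨0, hfinite 0 le_rfl⟩,
    fun c hc _ => ?_⟩
  · rw [fconj_max_ellL_of_le_rightDE hp₁0 hp₁1 hfp₁ hℓp₁ hle hq hqD, mul_max_of_nonneg _ _ hp₁0,
      mul_sub, mul_zero]
  · exact ((fconj_convexE g).continuousOn isOpen_Ioi (convex_Ioi 0) fun q hq =>
      ⟨hne_bot q, hfinite q (le_of_lt hq)⟩).continuousAt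
      (Ioi_mem_nhds hc)

/-- **Lemma 3.1(b)**: under the stated hypotheses on `f`, for `q ≥ 0` the conjugate of
`f ∨ ℓ_L` equals `p₁·(q - q₁)⁺` for `q ≤ D⁺f(p₁)` and `f^♯(q)` for `q > D⁺f(p₁)`
(when `D⁺f(p₁) = +∞` the first formula holds for all `q ≥ 0`); moreover
`(f ∨ ℓ_L)^♯` is a closed proper convex function, continuous at `D⁺f(p₁)` whenever
`0 < D⁺f(p₁) < +∞`. -/
theorem conj_max_ellL_formula
    (L : ℝ) (hL : 0 ≤ L) (p₁ : ℝ) (hp₁0 : 0 ≤ p₁) (hp₁1 : p₁ ≤ 1)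
    (f : ℝ → EReal) (hfbot : ∀ p, f p ≠ ⊥) (hmono : Monotone f) (hconv : ConvexE f)
    (hf0 : f 0 = 0)
    (hge : ∀ p : ℝ, p₁ ≤ p → ellL L p ≤ f p)
    (hle : ∀ p : ℝ, p ≤ p₁ → f p ≤ ellL L p)
    (q₁ : ℝ) (hq₁ : q₁ = if 0 < p₁ then L / p₁ else 0) :
    (∀ q : ℝ, 0 ≤ q →
      ((q : EReal) ≤ rightDE f p₁ →
        fconj (fun p => max (f p) (ellL L p)) q = ((p₁ * max (q - q₁) 0 : ℝ) : EReal)) ∧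
      (rightDE f p₁ < (q : EReal) →
        fconj (fun p => max (f p) (ellL L p)) q = fconj f q)) ∧
    ConvexE (fconj (fun p => max (f p) (ellL L p))) ∧
    LowerSemicontinuous (fconj (fun p => max (f p) (ellL L p))) ∧
    (∀ q : ℝ, fconj (fun p => max (f p) (ellL L p)) q ≠ ⊥) ∧
    (∃ q : ℝ, fconj (fun p => max (f p) (ellL L p)) q ≠ ⊤) ∧
    (∀ c : ℝ, 0 < c → rightDE f p₁ = (c : EReal) →
      ContinuousAt (fconj (fun p => max (f p) (ellL L p))) c) :=
  conj_max_ellL_formula_general L p₁ hp₁0 hp₁1 f hconv hge hle q₁ hq₁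
end
end

section
/- Let L ≥ 0 and let f : ℝ → [0,∞] be convex, non-decreasing, with f(0) = 0, f finite and continuous on (-∞,1], and f(p) = +∞ for p > 1. Then (f ∨ ℓ_L)^♯(q) = +∞ for every q < 0, and for every q ≥ 0: (i) if L > 0 and f(1) ≤ L, then (f ∨ ℓ_L)^♯(q) = max(q − L, 0); (ii) if L = 0, then (f ∨ ℓ_L)^♯(q) = f^♯(q); (iii) if L > 0 and f(1) > L, then, setting p_ℓ := min(sup{p ∈ ℝ : f(p) = L}, 1), q_ℓ := L/p_ℓ and q̄ := D⁺f(p_ℓ), one has p_ℓ ∈ (0,1), q̄ ∈ (0,∞), and (f ∨ ℓ_L)^♯(q) = p_ℓ·max(q − q_ℓ, 0) for 0 ≤ q ≤ q̄ while (f ∨ ℓ_L)^♯(q) = f^♯(q) for q > q̄. -/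
open scoped Classical
noncomputable section

private lemma ereal_eq_top_of_forall_le {a : EReal} (h : ∀ M : ℝ, (M : EReal) ≤ a) : a = ⊤ := by
  by_contra hne
  have hb : a ≠ ⊥ := ((lt_of_lt_of_le (by simp : (⊥ : EReal) < ((0 : ℝ) : EReal)) (h 0))).ne'
  lift a to ℝ using ⟨hne, hb⟩
  exact absurd (h (a + 1)) (by exact_mod_cast not_le.mpr (lt_add_one a))

private lemma convexOn_toReal_of_convexE (f : ℝ → EReal) (hconv : ConvexE f)
    (hpos : ∀ p, 0 ≤ f p) (hfin : ∀ p : ℝ, p ≤ 1 → f p ≠ ⊤) :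
    ConvexOn ℝ (Set.Iic 1) (fun p => (f p).toReal) := by
  have hbot : ∀ p, f p ≠ ⊥ := fun p h => by
    have := hpos p; rw [h] at this; simp at this
  have hco : ∀ p : ℝ, p ≤ 1 → f p = (((f p).toReal : ℝ) : EReal) :=
    fun p hp => (EReal.coe_toReal (hfin p hp) (hbot p)).symm
  refine ⟨convex_Iic 1, ?_⟩
  intro x hx y hy a b ha hb hab
  have hx1 : x ≤ 1 := hx
  have hy1 : y ≤ 1 := hy
  have hmem : a * x + b * y ≤ 1 := by nlinarith
  have h := hconv x y a ha (by linarith)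
  rw [show (1 - a : ℝ) = b by linarith] at h
  rw [hco x hx1, hco y hy1, hco _ hmem] at h
  rw [← EReal.coe_mul, ← EReal.coe_mul, ← EReal.coe_add] at h
  simp only [smul_eq_mul]
  exact_mod_cast h

/-- **Proposition 3.3(b)**: the conjugate of `f ∨ ℓ_L` is `+∞` for `q < 0` and, for
`q ≥ 0`: (i) if `L > 0` and `f 1 ≤ L` it equals `(q - L)⁺`; (ii) if `L = 0` it equals
`f^♯(q)`; (iii) if `L > 0` and `f 1 > L` then, with `p_ℓ := min(sup{p : f p = L},1)`,
`q_ℓ := L/p_ℓ` and `q̄ := D⁺f(p_ℓ)`, one has `p_ℓ ∈ (0,1)`, `q̄ ∈ (0,∞)`, and the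
conjugate equals `p_ℓ·(q - q_ℓ)⁺` for `0 ≤ q ≤ q̄` and `f^♯(q)` for `q > q̄`. -/
theorem conj_max_ellL_three_cases
    (L : ℝ) (hL : 0 ≤ L) (f : ℝ → EReal)
    (hpos : ∀ p, 0 ≤ f p) (hconv : ConvexE f) (hmono : Monotone f) (hf0 : f 0 = 0)
    (hfin : ∀ p : ℝ, p ≤ 1 → f p ≠ ⊤) (hcont : ContinuousOn f (Set.Iic 1))
    (htop : ∀ p : ℝ, 1 < p → f p = ⊤)
    (pℓ qℓ : ℝ)
    (hpℓ : pℓ = min (sSup {p : ℝ | f p = (L : EReal)}) 1)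
    (hqℓ : qℓ = L / pℓ) :
    (∀ q : ℝ, q < 0 → fconj (fun p => max (f p) (ellL L p)) q = ⊤) ∧
    (0 < L → f 1 ≤ (L : EReal) → ∀ q : ℝ, 0 ≤ q →
      fconj (fun p => max (f p) (ellL L p)) q = ((max (q - L) 0 : ℝ) : EReal)) ∧
    (L = 0 → ∀ q : ℝ, 0 ≤ q →
      fconj (fun p => max (f p) (ellL L p)) q = fconj f q) ∧
    (0 < L → (L : EReal) < f 1 →
      0 < pℓ ∧ pℓ < 1 ∧ 0 < rightDE f pℓ ∧ rightDE f pℓ < ⊤ ∧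
      ∀ q : ℝ, 0 ≤ q →
        ((q : EReal) ≤ rightDE f pℓ →
          fconj (fun p => max (f p) (ellL L p)) q = ((pℓ * max (q - qℓ) 0 : ℝ) : EReal)) ∧
        (rightDE f pℓ < (q : EReal) →
          fconj (fun p => max (f p) (ellL L p)) q = fconj f q)) := by
  set g : ℝ → EReal := fun p => max (f p) (ellL L p) with hgdef
  have hfneg : ∀ p : ℝ, p ≤ 0 → f p = 0 := by
    intro p hp
    have h1 := hmono hp
    rw [hf0] at h1
    exact le_antisymm h1 (hpos p)
  have hell0 : ∀ p : ℝ, p ≤ 0 → ellL L p = 0 := by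
    intro p hp; simp [ellL, hp]
  have hellmid : ∀ p : ℝ, 0 < p → p ≤ 1 → ellL L p = (L : EReal) := by
    intro p h0 h1; simp [ellL, not_le.mpr h0, h1]
  have helltop : ∀ p : ℝ, 1 < p → ellL L p = ⊤ := by
    intro p h1; simp [ellL, not_le.mpr (lt_trans one_pos h1), not_le.mpr h1]
  have hg0 : ∀ p : ℝ, p ≤ 0 → g p = 0 := by
    intro p hp
    simp only [hgdef]
    rw [hfneg p hp, hell0 p hp, max_self]
  have hgtop : ∀ p : ℝ, 1 < p → g p = ⊤ := by
    intro p hp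
    simp only [hgdef]
    rw [helltop p hp]
    exact max_eq_right le_top
  have hge : ∀ (q : ℝ) (p : ℝ), ((p * q : ℝ) : EReal) - g p ≤ fconj g q := by
    intro q p
    rw [fconj]
    exact le_iSup (fun p => ((p * q : ℝ) : EReal) - g p) p
  have hle : ∀ (q : ℝ) (c : EReal), (∀ p : ℝ, ((p * q : ℝ) : EReal) - g p ≤ c) →
      fconj g q ≤ c := by
    intro q c h
    rw [fconj]
    exact iSup_le h
  -- F : real-valued version of f on (-∞, 1]
  set F : ℝ → ℝ := fun p => (f p).toReal with hFdef
  have hbot : ∀ p, f p ≠ ⊥ := fun p h => by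
    have := hpos p; rw [h] at this; simp at this
  have hFf : ∀ p : ℝ, p ≤ 1 → f p = ((F p : ℝ) : EReal) :=
    fun p hp => (EReal.coe_toReal (hfin p hp) (hbot p)).symm
  have hF0 : F 0 = 0 := by simp only [hFdef]; rw [hf0]; rfl
  have hFconv : ConvexOn ℝ (Set.Iic 1) F := convexOn_toReal_of_convexE f hconv hpos hfin
  -- Part 1
  have part1 : ∀ q : ℝ, q < 0 → fconj g q = ⊤ := by
    intro q hq
    apply ereal_eq_top_of_forall_le
    intro M
    set p := min (M / q) 0 with hp
    have hp0 : p ≤ 0 := min_le_right _ _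
    have hMpq : M ≤ p * q := by
      have h1 : p ≤ M / q := min_le_left _ _
      have h2 : (M / q) * q ≤ p * q := mul_le_mul_of_nonpos_right h1 hq.le
      have h3 : (M / q) * q = M := div_mul_cancel₀ M hq.ne
      linarith
    calc (M : EReal) ≤ ((p * q : ℝ) : EReal) := by exact_mod_cast hMpq
      _ = ((p * q : ℝ) : EReal) - g p := by rw [hg0 p hp0]; simp
      _ ≤ fconj g q := hge q p
  -- Part 2
  have part2 : 0 < L → f 1 ≤ (L : EReal) → ∀ q : ℝ, 0 ≤ q →
      fconj g q = ((max (q - L) 0 : ℝ) : EReal) := by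
    intro hL0 hf1 q hq
    apply le_antisymm
    · apply hle
      intro p
      rcases le_or_gt p 0 with hp | hp
      · rw [hg0 p hp]
        have h1 : p * q ≤ max (q - L) 0 := by nlinarith [le_max_right (q - L) (0 : ℝ)]
        calc ((p * q : ℝ) : EReal) - 0 = ((p * q : ℝ) : EReal) := by simp
          _ ≤ ((max (q - L) 0 : ℝ) : EReal) := by exact_mod_cast h1
      · rcases le_or_gt p 1 with hp1 | hp1
        · have hgp : g p = (L : EReal) := by
            simp only [hgdef]
            rw [hellmid p hp hp1]
            exact max_eq_right (le_trans (hmono hp1) hf1)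
          rw [hgp, ← EReal.coe_sub]
          have h1 : p * q - L ≤ max (q - L) 0 := by nlinarith [le_max_left (q - L) (0 : ℝ)]
          exact_mod_cast h1
        · rw [hgtop p hp1, EReal.sub_top]; exact bot_le
    · rcases le_or_gt q L with h | h
      · have hmax : max (q - L) 0 = 0 := max_eq_right (by linarith)
        rw [hmax]
        calc ((0 : ℝ) : EReal) = ((0 * q : ℝ) : EReal) - g 0 := by
              rw [hg0 0 le_rfl]; norm_num
          _ ≤ fconj g q := hge q 0
      · have hmax : max (q - L) 0 = q - L := max_eq_left (by linarith)
        rw [hmax]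
        have hg1 : g 1 = (L : EReal) := by
          simp only [hgdef]
          rw [hellmid 1 one_pos le_rfl]
          exact max_eq_right hf1
        calc ((q - L : ℝ) : EReal) = ((1 * q : ℝ) : EReal) - g 1 := by
              rw [hg1, ← EReal.coe_sub]; norm_num
          _ ≤ fconj g q := hge q 1
  -- Part 3
  have part3 : L = 0 → ∀ q : ℝ, 0 ≤ q → fconj g q = fconj f q := by
    intro hL0 q _
    have hgf : g = f := by
      funext p
      simp only [hgdef]
      rcases le_or_gt p 1 with hp | hp
      · have he : ellL L p = 0 := by
          rcases le_or_gt p 0 with h | h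
          · exact hell0 p h
          · rw [hellmid p h hp, hL0]; rfl
        rw [he]
        exact max_eq_left (hpos p)
      · rw [htop p hp]
        exact max_eq_left le_top
    rw [hgf]
  refine ⟨part1, part2, part3, ?_⟩
  intro hL0 hLf1
  -- existence of a point where f = L, via IVT
  have hIVT := intermediate_value_Icc (by norm_num : (0:ℝ) ≤ 1)
    (hcont.mono Set.Icc_subset_Iic_self)
  have hLmem : (L : EReal) ∈ Set.Icc (f 0) (f 1) := by
    constructor
    · rw [hf0]; exact_mod_cast hL0.le
    · exact hLf1.le
  obtain ⟨p₀, hp₀mem, hp₀⟩ := hIVT hLmem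
  have hp₀pos : 0 < p₀ := by
    rcases hp₀mem.1.lt_or_eq with h | h
    · exact h
    · exfalso
      rw [← h, hf0] at hp₀
      have : (0:ℝ) = L := by exact_mod_cast hp₀
      linarith
  have hub1 : ∀ p ∈ {p : ℝ | f p = (L : EReal)}, p ≤ 1 := by
    intro p hp
    by_contra hc
    push_neg at hc
    rw [Set.mem_setOf_eq, htop p hc] at hp
    exact (EReal.coe_ne_top L) hp.symm
  have hSne : Set.Nonempty {p : ℝ | f p = (L : EReal)} := ⟨p₀, hp₀⟩
  have hSbdd : BddAbove {p : ℝ | f p = (L : EReal)} := ⟨1, hub1⟩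
  have hsp₀ : p₀ ≤ sSup {p : ℝ | f p = (L : EReal)} := le_csSup hSbdd hp₀
  -- the sup is strictly less than 1, by continuity at 1
  have hev : f ⁻¹' (Set.Ioi (L : EReal)) ∈ nhdsWithin 1 (Set.Iic 1) :=
    (hcont 1 (Set.mem_Iic.mpr le_rfl)) (isOpen_Ioi.mem_nhds hLf1)
  obtain ⟨U, hUo, h1U, hU⟩ := mem_nhdsWithin.mp hev
  obtain ⟨ε, hε, hball⟩ := Metric.isOpen_iff.mp hUo 1 h1U
  have hub2 : ∀ p ∈ {p : ℝ | f p = (L : EReal)}, p ≤ 1 - ε := by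
    intro p hp
    by_contra hc
    push_neg at hc
    have hp1 := hub1 p hp
    have hpU : p ∈ U := hball (by
      rw [Metric.mem_ball, Real.dist_eq, abs_lt]; constructor <;> linarith)
    have h2 := hU ⟨hpU, Set.mem_Iic.mpr hp1⟩
    rw [Set.mem_preimage, hp] at h2
    exact lt_irrefl _ (Set.mem_Ioi.mp h2)
  have hs1 : sSup {p : ℝ | f p = (L : EReal)} < 1 :=
    lt_of_le_of_lt (csSup_le hSne hub2) (by linarith)
  have hpℓs : pℓ = sSup {p : ℝ | f p = (L : EReal)} := by
    rw [hpℓ]; exact min_eq_left hs1.le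
  have hpℓpos : 0 < pℓ := by rw [hpℓs]; exact lt_of_lt_of_le hp₀pos hsp₀
  have hpℓ1 : pℓ < 1 := by rw [hpℓs]; exact hs1
  -- f pℓ = L
  have hfs_ge : (L : EReal) ≤ f pℓ := by
    rw [← hp₀]
    apply hmono
    rw [hpℓs]; exact hsp₀
  have hfs_le : f pℓ ≤ (L : EReal) := by
    by_contra hc
    push_neg at hc
    have hev2 : f ⁻¹' (Set.Ioi (L : EReal)) ∈ nhdsWithin pℓ (Set.Iic 1) :=
      (hcont pℓ (Set.mem_Iic.mpr hpℓ1.le)) (isOpen_Ioi.mem_nhds hc)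
    obtain ⟨V, hVo, hpV, hV⟩ := mem_nhdsWithin.mp hev2
    obtain ⟨δ, hδ, hballV⟩ := Metric.isOpen_iff.mp hVo pℓ hpV
    obtain ⟨p, hpS, hps⟩ := exists_lt_of_lt_csSup hSne
      (show sSup {p : ℝ | f p = (L : EReal)} - δ < sSup {p : ℝ | f p = (L : EReal)} by linarith)
    have hple : p ≤ pℓ := by rw [hpℓs]; exact le_csSup hSbdd hpS
    have hps' : pℓ - δ < p := by rw [hpℓs]; exact hps
    have hpV' : p ∈ V := hballV (by
      rw [Metric.mem_ball, Real.dist_eq, abs_lt]; constructor <;> linarith)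
    have h2 := hV ⟨hpV', Set.mem_Iic.mpr (hub1 p hpS)⟩
    rw [Set.mem_preimage, hpS] at h2
    exact lt_irrefl _ (Set.mem_Ioi.mp h2)
  have hfpℓ : f pℓ = (L : EReal) := le_antisymm hfs_le hfs_ge
  have hFpℓ : F pℓ = L := by
    have h1 := hfpℓ
    rw [hFf pℓ hpℓ1.le] at h1
    exact_mod_cast h1
  -- right-derivative term computations
  have hterm : ∀ h : ℝ, 0 < h → pℓ + h ≤ 1 →
      ((h⁻¹ : ℝ) : EReal) * (f (pℓ + h) - f pℓ) = (((F (pℓ + h) - F pℓ) / h : ℝ) : EReal) := by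
    intro h hh hle1
    rw [hFf (pℓ + h) hle1, hFf pℓ hpℓ1.le, ← EReal.coe_sub, ← EReal.coe_mul, inv_mul_eq_div]
  have htermtop : ∀ h : ℝ, 0 < h → 1 < pℓ + h →
      ((h⁻¹ : ℝ) : EReal) * (f (pℓ + h) - f pℓ) = ⊤ := by
    intro h hh hgt
    rw [htop _ hgt, hfpℓ, EReal.top_sub_coe]
    exact EReal.mul_top_of_pos (by exact_mod_cast inv_pos.mpr hh)
  have hinf_le : ∀ h : ℝ, 0 < h →
      rightDE f pℓ ≤ ((h⁻¹ : ℝ) : EReal) * (f (pℓ + h) - f pℓ) := by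
    intro h hh
    rw [rightDE]
    exact iInf_le (fun i : {h : ℝ // 0 < h} =>
      ((i.1⁻¹ : ℝ) : EReal) * (f (pℓ + i.1) - f pℓ)) ⟨h, hh⟩
  have hqℓpos : 0 < qℓ := by rw [hqℓ]; exact div_pos hL0 hpℓpos
  have hpq : pℓ * qℓ = L := by rw [hqℓ]; field_simp
  have hDge : (qℓ : EReal) ≤ rightDE f pℓ := by
    rw [rightDE]
    apply le_iInf
    rintro ⟨h, hh⟩
    show (qℓ : EReal) ≤ ((h⁻¹ : ℝ) : EReal) * (f (pℓ + h) - f pℓ)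
    rcases le_or_gt (pℓ + h) 1 with hle1 | hgt
    · rw [hterm h hh hle1]
      apply EReal.coe_le_coe_iff.mpr
      have hsl := hFconv.slope_mono_adjacent (Set.mem_Iic.mpr (by norm_num : (0:ℝ) ≤ 1))
        (Set.mem_Iic.mpr hle1) hpℓpos (by linarith : pℓ < pℓ + h)
      rw [hF0, sub_zero, sub_zero, add_sub_cancel_left] at hsl
      rw [hqℓ, ← hFpℓ]
      exact hsl
    · rw [htermtop h hh hgt]; exact le_top
  have hDpos : 0 < rightDE f pℓ :=
    lt_of_lt_of_le (by exact_mod_cast hqℓpos) hDge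
  have hDle : rightDE f pℓ ≤ (((F 1 - L) / (1 - pℓ) : ℝ) : EReal) := by
    have h1 : (0:ℝ) < 1 - pℓ := by linarith
    calc rightDE f pℓ ≤ (((1 - pℓ)⁻¹ : ℝ) : EReal) * (f (pℓ + (1 - pℓ)) - f pℓ) :=
          hinf_le (1 - pℓ) h1
      _ = (((F (pℓ + (1 - pℓ)) - F pℓ) / (1 - pℓ) : ℝ) : EReal) :=
          hterm _ h1 (by linarith)
      _ = (((F 1 - L) / (1 - pℓ) : ℝ) : EReal) := by
          rw [show pℓ + (1 - pℓ) = 1 by ring, hFpℓ]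
  have hDtop : rightDE f pℓ < ⊤ := lt_of_le_of_lt hDle (EReal.coe_lt_top _)
  have hslope_le_D : ∀ p : ℝ, p < pℓ →
      (((F pℓ - F p) / (pℓ - p) : ℝ) : EReal) ≤ rightDE f pℓ := by
    intro p hp
    rw [rightDE]
    apply le_iInf
    rintro ⟨h, hh⟩
    show _ ≤ ((h⁻¹ : ℝ) : EReal) * (f (pℓ + h) - f pℓ)
    rcases le_or_gt (pℓ + h) 1 with hle1 | hgt
    · rw [hterm h hh hle1]
      apply EReal.coe_le_coe_iff.mpr
      have hsl := hFconv.slope_mono_adjacent (Set.mem_Iic.mpr (by linarith : p ≤ 1))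
        (Set.mem_Iic.mpr hle1) hp (by linarith : pℓ < pℓ + h)
      rw [add_sub_cancel_left] at hsl
      exact hsl
    · rw [htermtop h hh hgt]; exact le_top
  have hC : ∀ q : ℝ, (q : EReal) ≤ rightDE f pℓ → ∀ p : ℝ, pℓ < p → p ≤ 1 →
      L + q * (p - pℓ) ≤ F p := by
    intro q hq p hp hp1
    have hpp : (0:ℝ) < p - pℓ := by linarith
    have h1 : rightDE f pℓ ≤ (((F p - L) / (p - pℓ) : ℝ) : EReal) := by
      calc rightDE f pℓ ≤ (((p - pℓ)⁻¹ : ℝ) : EReal) * (f (pℓ + (p - pℓ)) - f pℓ) :=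
            hinf_le (p - pℓ) hpp
        _ = (((F (pℓ + (p - pℓ)) - F pℓ) / (p - pℓ) : ℝ) : EReal) :=
            hterm _ hpp (by linarith)
        _ = (((F p - L) / (p - pℓ) : ℝ) : EReal) := by
            rw [show pℓ + (p - pℓ) = p by ring, hFpℓ]
    have h2 : q ≤ (F p - L) / (p - pℓ) := by exact_mod_cast le_trans hq h1
    have h3 := (le_div_iff₀ hpp).mp h2
    linarith
  -- values of g on the relevant regions
  have hgpl : ∀ p : ℝ, 0 < p → p ≤ pℓ → g p = (L : EReal) := by
    intro p h0 h1
    simp only [hgdef]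
    rw [hellmid p h0 (le_trans h1 hpℓ1.le)]
    refine max_eq_right ?_
    rw [← hfpℓ]; exact hmono h1
  have hgright : ∀ p : ℝ, pℓ ≤ p → p ≤ 1 → g p = f p := by
    intro p h0 h1
    simp only [hgdef]
    rw [hellmid p (lt_of_lt_of_le hpℓpos h0) h1]
    refine max_eq_left ?_
    rw [← hfpℓ]; exact hmono h0
  refine ⟨hpℓpos, hpℓ1, hDpos, hDtop, ?_⟩
  intro q hq
  constructor
  · -- case q ≤ D⁺
    intro hqD
    apply le_antisymm
    · apply hle
      intro p
      rcases le_or_gt p 0 with hp | hp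
      · rw [hg0 p hp]
        have h1 : p * q ≤ pℓ * max (q - qℓ) 0 := by
          nlinarith [le_max_right (q - qℓ) (0:ℝ),
            mul_nonneg hpℓpos.le (le_max_right (q - qℓ) (0:ℝ))]
        calc ((p * q : ℝ) : EReal) - 0 = ((p * q : ℝ) : EReal) := by simp
          _ ≤ ((pℓ * max (q - qℓ) 0 : ℝ) : EReal) := by exact_mod_cast h1
      · rcases le_or_gt p pℓ with hp2 | hp2
        · rw [hgpl p hp hp2, ← EReal.coe_sub]
          apply EReal.coe_le_coe_iff.mpr
          rcases le_or_gt q qℓ with h | h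
          · have hpqL : p * q ≤ L := by
              nlinarith [mul_le_mul_of_nonneg_left h hp.le,
                mul_le_mul_of_nonneg_right hp2 hqℓpos.le]
            nlinarith [mul_nonneg hpℓpos.le (le_max_right (q - qℓ) (0:ℝ))]
          · have hm : max (q - qℓ) 0 = q - qℓ := max_eq_left (by linarith)
            rw [hm]
            nlinarith [mul_le_mul_of_nonneg_right hp2 hq]
        · rcases le_or_gt p 1 with hp3 | hp3
          · rw [hgright p hp2.le hp3, hFf p hp3, ← EReal.coe_sub]
            apply EReal.coe_le_coe_iff.mpr
            have hCp := hC q hqD p hp2 hp3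
            nlinarith [mul_le_mul_of_nonneg_left (le_max_left (q - qℓ) (0:ℝ)) hpℓpos.le]
          · rw [hgtop p hp3, EReal.sub_top]; exact bot_le
    · rcases le_or_gt q qℓ with h | h
      · have hm : max (q - qℓ) 0 = 0 := max_eq_right (by linarith)
        rw [hm, mul_zero]
        calc ((0 : ℝ) : EReal) = ((0 * q : ℝ) : EReal) - g 0 := by
              rw [hg0 0 le_rfl]; norm_num
          _ ≤ fconj g q := hge q 0
      · have hm : max (q - qℓ) 0 = q - qℓ := max_eq_left (by linarith)
        rw [hm]
        have heq : pℓ * (q - qℓ) = pℓ * q - L := by rw [mul_sub, hpq]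
        rw [heq]
        have h2 := hge q pℓ
        rw [hgpl pℓ hpℓpos le_rfl, ← EReal.coe_sub] at h2
        exact h2
  · -- case q > D⁺
    intro hqD
    apply le_antisymm
    · apply hle
      intro p
      refine le_trans (EReal.sub_le_sub le_rfl (le_max_left _ _)) ?_
      rw [fconj]
      exact le_iSup (fun p => ((p * q : ℝ) : EReal) - f p) p
    · rw [fconj, fconj]
      apply iSup_le
      intro p
      rcases lt_or_ge (1:ℝ) p with hp | hp
      · rw [htop p hp, EReal.sub_top]; exact bot_le
      rcases le_or_gt pℓ p with hp2 | hp2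
      · rw [← hgright p hp2 hp]
        exact le_iSup (fun p => ((p * q : ℝ) : EReal) - g p) p
      · have hsl := hslope_le_D p hp2
        have h1 : (F pℓ - F p) / (pℓ - p) < q := by
          exact_mod_cast lt_of_le_of_lt hsl hqD
        have h2 := (div_lt_iff₀ (by linarith : (0:ℝ) < pℓ - p)).mp h1
        have hineq : p * q - F p ≤ pℓ * q - L := by rw [← hFpℓ]; nlinarith
        calc ((p * q : ℝ) : EReal) - f p = ((p * q - F p : ℝ) : EReal) := by
              rw [hFf p hp, ← EReal.coe_sub]
          _ ≤ ((pℓ * q - L : ℝ) : EReal) := by exact_mod_cast hineq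
          _ = ((pℓ * q : ℝ) : EReal) - g pℓ := by
              rw [hgpl pℓ hpℓpos le_rfl, ← EReal.coe_sub]
          _ ≤ ⨆ p : ℝ, ((p * q : ℝ) : EReal) - g p :=
              le_iSup (fun p => ((p * q : ℝ) : EReal) - g p) pℓ
end
end

section
/- Let L > 0 and let f : ℝ → [0,∞] be convex, non-decreasing, with f(0) = 0, f finite and continuous on (-∞,1], f(p) = +∞ for p > 1, and f(1) > L. Set p_ℓ := min(sup{p ∈ ℝ : f(p) = L}, 1), q_ℓ := L/p_ℓ, q̄ := D⁺f(p_ℓ), and κ := (f ∨ ℓ_L)^♯. Then for q ≥ 0: D⁺κ(q) = 0 if 0 ≤ q < q_ℓ; D⁺κ(q) = p_ℓ if q_ℓ ≤ q < q̄; and D⁺κ(q) = D⁺f^♯(q) if q ≥ q̄. For q > 0: D⁻κ(q) = 0 if 0 < q ≤ q_ℓ; D⁻κ(q) = p_ℓ if q_ℓ < q ≤ q̄; and D⁻κ(q) = D⁻f^♯(q) if q > q̄. -/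
open scoped Classical
noncomputable section

/-!
The line through `(pℓ, L)` with slope `q̄ = D⁺f(pℓ)` supports `f`, and `f ∨ ℓ_L` is `0` on
`(-∞, 0]`, `L` on `(0, pℓ]` and `f` on `[pℓ, ∞)`. Hence for `0 ≤ q ≤ q̄` no `p > pℓ` beats `p = pℓ`
in the supremum defining `κ`, so `κ q = max 0 (pℓ q - L)`; for `q ≥ q̄` no `p < pℓ` beats `p = pℓ`,
so `κ = f^♯` there. The one-sided derivatives follow: `κ` lies above the lines `0` and `pℓ q - L`
and touches them on `[0, qℓ]` and `[qℓ, q̄]`; for `q > q̄`, a left difference quotient of `κ` over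
a step reaching below `q̄` is dominated by the one reaching exactly `q̄`, where `κ = f^♯`.
-/

open Set

section Slopes

theorem coe_inv_mul_coe_sub_coe (h x y : ℝ) :
    ((h⁻¹ : ℝ) : EReal) * ((x : EReal) - y) = ((x - y) / h : ℝ) := by
  rw [← EReal.coe_sub, ← EReal.coe_mul, inv_mul_eq_div]

theorem inv_mul_sub_le_inv_mul_sub {h : ℝ} (hh : 0 < h) {y y' z z' : EReal} (hy : y ≤ y')
    (hz : z' ≤ z) : ((h⁻¹ : ℝ) : EReal) * (y - z) ≤ ((h⁻¹ : ℝ) : EReal) * (y' - z') :=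
  mul_le_mul_of_nonneg_left (EReal.sub_le_sub hy hz) (EReal.coe_nonneg.2 (inv_pos.2 hh).le)

theorem coe_sub_le_coe_sub {x y : ℝ} {z : EReal} (h : (y : EReal) ≤ z) :
    (x : EReal) - z ≤ ((x - y : ℝ) : EReal) := by
  rw [EReal.coe_sub]; exact EReal.sub_le_sub le_rfl h

variable {φ ψ : ℝ → EReal} {a b q r : ℝ}

theorem rightDE_eq_of_le_line (hqr : q < r) (hle : ∀ x, ((a * x - b : ℝ) : EReal) ≤ φ x)
    (hq : φ q = ((a * q - b : ℝ) : EReal)) (hr : φ r = ((a * r - b : ℝ) : EReal)) :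
    rightDE φ q = a := by
  refine le_antisymm (iInf_le_of_le ⟨r - q, sub_pos.2 hqr⟩ (le_of_eq ?_)) (le_iInf fun h => ?_)
  · rw [add_sub_cancel, hr, hq, coe_inv_mul_coe_sub_coe, EReal.coe_eq_coe_iff]
    field_simp [(sub_pos.2 hqr).ne']
    ring
  · calc (a : EReal) = ((h.1⁻¹ : ℝ) : EReal) * ((a * (q + h.1) - b : ℝ) - (a * q - b : ℝ)) := by
          rw [coe_inv_mul_coe_sub_coe, EReal.coe_eq_coe_iff]
          field_simp [h.2.ne']
          ring
      _ ≤ _ := inv_mul_sub_le_inv_mul_sub h.2 (hle _) hq.le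

theorem leftDE_eq_of_le_line (hqr : q < r) (hle : ∀ x, ((a * x - b : ℝ) : EReal) ≤ φ x)
    (hq : φ q = ((a * q - b : ℝ) : EReal)) (hr : φ r = ((a * r - b : ℝ) : EReal)) :
    leftDE φ r = a := by
  refine le_antisymm (iSup_le fun h => ?_) (le_iSup_of_le ⟨r - q, sub_pos.2 hqr⟩ (le_of_eq ?_))
  · calc ((h.1⁻¹ : ℝ) : EReal) * (φ r - φ (r - h.1))
        ≤ ((h.1⁻¹ : ℝ) : EReal) * ((a * r - b : ℝ) - (a * (r - h.1) - b : ℝ)) :=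
          inv_mul_sub_le_inv_mul_sub h.2 hr.le (hle _)
      _ = a := by
          rw [coe_inv_mul_coe_sub_coe, EReal.coe_eq_coe_iff]
          field_simp [h.2.ne']
          ring
  · rw [sub_sub_cancel, hr, hq, coe_inv_mul_coe_sub_coe, EReal.coe_eq_coe_iff]
    field_simp [(sub_pos.2 hqr).ne']
    ring

theorem rightDE_congr_of_eqOn_Ici (h : EqOn φ ψ (Ici q)) : rightDE φ q = rightDE ψ q :=
  iInf_congr fun t => by
    rw [h (show q ≤ q + t.1 by linarith [t.2]), h self_mem_Ici]

theorem leftDE_le_of_eqOn_Icc (hqr : q < r) (hle : ∀ x, ((a * x - b : ℝ) : EReal) ≤ φ x)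
    (hq : φ q = ((a * q - b : ℝ) : EReal)) (hr : φ r ≠ ⊤) (heq : EqOn φ ψ (Icc q r)) :
    leftDE φ r ≤ leftDE ψ r := by
  obtain ⟨A, hA⟩ : ∃ A : ℝ, φ r = A :=
    ⟨(φ r).toReal, (EReal.coe_toReal hr (ne_bot_of_le_ne_bot (EReal.coe_ne_bot _) (hle r))).symm⟩
  have hAr : a * r - b ≤ A := EReal.coe_le_coe_iff.1 (hA ▸ hle r)
  refine iSup_le fun h => ?_
  rcases le_or_gt h.1 (r - q) with hh | hh
  · refine le_iSup_of_le h (le_of_eq ?_)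
    rw [heq ⟨by linarith, le_rfl⟩, heq ⟨by linarith, by linarith [h.2]⟩]
  · -- `φ` lies above a line touching it at `q`, so a longer step has a smaller slope
    refine le_iSup_of_le ⟨r - q, sub_pos.2 hqr⟩ ?_
    have hd : 0 < r - q := sub_pos.2 hqr
    calc ((h.1⁻¹ : ℝ) : EReal) * (φ r - φ (r - h.1))
        ≤ ((h.1⁻¹ : ℝ) : EReal) * (A - (a * (r - h.1) - b : ℝ)) :=
          inv_mul_sub_le_inv_mul_sub h.2 hA.le (hle _)
      _ ≤ ((((r - q)⁻¹ : ℝ)) : EReal) * (A - (a * q - b : ℝ)) := by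
          rw [coe_inv_mul_coe_sub_coe, coe_inv_mul_coe_sub_coe, EReal.coe_le_coe_iff,
            div_le_div_iff₀ h.2 hd]
          nlinarith
      _ = _ := by
          rw [← hA, ← hq, sub_sub_cancel, heq ⟨hqr.le, le_rfl⟩, heq ⟨le_rfl, hqr.le⟩]

theorem leftDE_congr_of_eqOn_Icc (hqr : q < r) (hφ : ∀ x, ((a * x - b : ℝ) : EReal) ≤ φ x)
    (hψ : ∀ x, ((a * x - b : ℝ) : EReal) ≤ ψ x) (hq : φ q = ((a * q - b : ℝ) : EReal))
    (hr : φ r ≠ ⊤) (heq : EqOn φ ψ (Icc q r)) : leftDE φ r = leftDE ψ r := by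
  refine le_antisymm (leftDE_le_of_eqOn_Icc hqr hφ hq hr heq)
    (leftDE_le_of_eqOn_Icc hqr hψ ?_ ?_ heq.symm)
  · rw [← heq ⟨le_rfl, hqr.le⟩, hq]
  · rwa [← heq ⟨hqr.le, le_rfl⟩]

end Slopes

section Convex

variable {f : ℝ → EReal} {a b : ℝ}

theorem ConvexE.div_sub_le_rightDE (hconv : ConvexE f) (hbot : ∀ x, f x ≠ ⊥) (hab : a < b)
    {ya yb : ℝ} (ha : f a = ya) (hb : f b = yb) :
    (((yb - ya) / (b - a) : ℝ) : EReal) ≤ rightDE f b := by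
  refine le_iInf fun h => ?_
  by_cases htop : f (b + h.1) = ⊤
  · rw [htop, hb, EReal.top_sub_coe, EReal.coe_mul_top_of_pos (inv_pos.2 h.2)]
    exact le_top
  obtain ⟨yc, hc⟩ : ∃ yc : ℝ, f (b + h.1) = yc :=
    ⟨_, (EReal.coe_toReal htop (hbot _)).symm⟩
  have hd : 0 < b - a + h.1 := by linarith [h.2]
  -- `b` is the convex combination of `a` and `b + h` with weight `h / (b - a + h)` on `a`
  have hcomb := hconv a (b + h.1) (h.1 / (b - a + h.1)) (div_nonneg h.2.le hd.le)
    ((div_le_one hd).2 (by linarith))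
  rw [show h.1 / (b - a + h.1) * a + (1 - h.1 / (b - a + h.1)) * (b + h.1) = b by
      field_simp; ring, ha, hc, hb, ← EReal.coe_mul, ← EReal.coe_mul, ← EReal.coe_add,
    EReal.coe_le_coe_iff] at hcomb
  rw [hc, hb, coe_inv_mul_coe_sub_coe, EReal.coe_le_coe_iff,
    div_le_div_iff₀ (sub_pos.2 hab) h.2]
  have key : yb * (b - a + h.1) ≤ h.1 * ya + (b - a) * yc := by
    have := mul_le_mul_of_nonneg_right hcomb hd.le
    rwa [show (h.1 / (b - a + h.1) * ya + (1 - h.1 / (b - a + h.1)) * yc) * (b - a + h.1)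
      = h.1 * ya + (b - a) * yc by field_simp; ring] at this
  linarith

theorem ConvexE.exists_rightDE_eq_coe (hconv : ConvexE f) (hbot : ∀ x, f x ≠ ⊥) {c : ℝ}
    (hab : a < b) (hbc : b < c) {ya yb : ℝ} (ha : f a = ya) (hb : f b = yb) (hc : f c ≠ ⊤) :
    ∃ s : ℝ, rightDE f b = s ∧ (yb - ya) / (b - a) ≤ s := by
  have hlo := hconv.div_sub_le_rightDE hbot hab ha hb
  obtain ⟨yc, hyc⟩ : ∃ yc : ℝ, f c = yc := ⟨_, (EReal.coe_toReal hc (hbot _)).symm⟩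
  have hhi : rightDE f b ≤ ((yc - yb) / (c - b) : ℝ) := by
    refine iInf_le_of_le ⟨c - b, sub_pos.2 hbc⟩ (le_of_eq ?_)
    rw [add_sub_cancel, hyc, hb, coe_inv_mul_coe_sub_coe]
  have hs := EReal.coe_toReal (ne_top_of_le_ne_top (EReal.coe_ne_top _) hhi)
    (ne_bot_of_le_ne_bot (EReal.coe_ne_bot _) hlo)
  exact ⟨_, hs.symm, EReal.coe_le_coe_iff.1 (hs ▸ hlo)⟩

theorem ConvexE.mem_subdiffE_of_rightDE_eq (hconv : ConvexE f) (hbot : ∀ x, f x ≠ ⊥)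
    {yb s : ℝ} (hb : f b = yb) (hs : rightDE f b = s) : s ∈ subdiffE f b := by
  intro r
  by_cases htop : f r = ⊤
  · rw [htop]; exact le_top
  obtain ⟨yr, hr⟩ : ∃ yr : ℝ, f r = yr := ⟨_, (EReal.coe_toReal htop (hbot _)).symm⟩
  rw [hb, hr, ← EReal.coe_add, EReal.coe_le_coe_iff]
  rcases lt_trichotomy r b with hrb | rfl | hbr
  · have hchord := hconv.div_sub_le_rightDE hbot hrb hr hb
    rw [hs, EReal.coe_le_coe_iff, div_le_iff₀ (sub_pos.2 hrb)] at hchord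
    linarith
  · rw [hb] at hr
    simp [EReal.coe_injective hr]
  · have hslope : rightDE f b ≤ ((r - b)⁻¹ : ℝ) * (f (b + (r - b)) - f b) :=
      iInf_le_of_le ⟨r - b, sub_pos.2 hbr⟩ le_rfl
    rw [hs, add_sub_cancel, hr, hb, coe_inv_mul_coe_sub_coe, EReal.coe_le_coe_iff,
      le_div_iff₀ (sub_pos.2 hbr)] at hslope
    linarith

end Convex

section Conjugate

variable {φ ψ : ℝ → EReal}

theorem coe_mul_sub_le_fconj (φ : ℝ → EReal) (p q : ℝ) : ((p * q : ℝ) : EReal) - φ p ≤ fconj φ q :=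
  le_iSup (fun p => ((p * q : ℝ) : EReal) - φ p) p

theorem fconj_le_fconj (h : ∀ p, φ p ≤ ψ p) (q : ℝ) : fconj ψ q ≤ fconj φ q :=
  iSup_le fun p => (EReal.sub_le_sub le_rfl (h p)).trans (coe_mul_sub_le_fconj φ p q)

theorem fconj_le_of_nonneg_of_eq_top {q : ℝ} (hpos : ∀ p, 0 ≤ φ p) (htop : ∀ p, 1 < p → φ p = ⊤)
    (hq : 0 ≤ q) : fconj φ q ≤ q := by
  refine iSup_le fun p => ?_
  rcases le_or_gt p 1 with hp | hp
  · refine (coe_sub_le_coe_sub (y := 0) (by simpa using hpos p)).trans ?_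
    exact EReal.coe_le_coe_iff.2 (by nlinarith)
  · rw [htop p hp, EReal.sub_top]
    exact bot_le

end Conjugate

section LevelSet

variable {L : ℝ} {f : ℝ → EReal}

theorem isClosed_setOf_eq_coe (hcont : ContinuousOn f (Iic 1))
    (htop : ∀ p : ℝ, 1 < p → f p = ⊤) : IsClosed {p | f p = (L : EReal)} := by
  have hS : {p | f p = (L : EReal)} = Iic 1 ∩ f ⁻¹' {(L : EReal)} := by
    ext p
    refine ⟨fun hp => ⟨mem_Iic.2 (not_lt.1 fun h1 => ?_), hp⟩, fun hp => hp.2⟩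
    exact EReal.coe_ne_top L ((htop p h1).symm.trans hp).symm
  rw [hS]
  exact hcont.preimage_isClosed_of_isClosed isClosed_Iic isClosed_singleton

theorem min_sSup_setOf_eq_coe_spec (hL : 0 < L) (hmono : Monotone f) (hf0 : f 0 = 0)
    (hcont : ContinuousOn f (Iic 1)) (htop : ∀ p : ℝ, 1 < p → f p = ⊤) (hf1 : (L : EReal) < f 1) :
    min (sSup {p | f p = (L : EReal)}) 1 ∈ Ioo 0 1 ∧
      f (min (sSup {p | f p = (L : EReal)}) 1) = L := by
  set S := {p | f p = (L : EReal)}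
  have hS1 : ∀ p ∈ S, p ≤ 1 := fun p hp => not_lt.1 fun h1 =>
    EReal.coe_ne_top L ((htop p h1).symm.trans hp).symm
  obtain ⟨p, -, hp⟩ := intermediate_value_Icc zero_le_one (hcont.mono Icc_subset_Iic_self)
    ⟨by rw [hf0]; exact EReal.coe_nonneg.2 hL.le, hf1.le⟩
  have hmem : sSup S ∈ S := (isClosed_setOf_eq_coe hcont htop).csSup_mem ⟨p, hp⟩ ⟨1, hS1⟩
  rw [min_eq_left (csSup_le ⟨p, hp⟩ hS1)]
  refine ⟨⟨not_le.1 fun h0 => ?_, (csSup_le ⟨p, hp⟩ hS1).lt_of_ne fun h1 => ?_⟩, hmem⟩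
  · have := hmono h0
    rw [hmem, hf0] at this
    exact hL.not_ge (EReal.coe_nonpos.1 this)
  · exact hf1.ne (h1 ▸ hmem).symm

end LevelSet

section ConjugateOfMaxEllL

variable {L : ℝ} {f : ℝ → EReal} {pℓ qbar q : ℝ}

theorem max_ellL_eq_left (hmono : Monotone f) (htop : ∀ p : ℝ, 1 < p → f p = ⊤)
    (hfp : f pℓ = L) (hpℓ : 0 < pℓ) {p : ℝ} (hp : pℓ ≤ p) : max (f p) (ellL L p) = f p := by
  refine max_eq_left ?_
  rw [ellL, if_neg (by linarith)]
  split_ifs with h1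
  · exact hfp ▸ hmono hp
  · rw [htop p (not_le.1 h1)]

theorem fconj_max_ellL_nonneg (hf0 : f 0 = 0) (x : ℝ) :
    0 ≤ fconj (fun p => max (f p) (ellL L p)) x := by
  simpa [ellL, hf0] using coe_mul_sub_le_fconj (fun p => max (f p) (ellL L p)) 0 x

theorem coe_mul_sub_le_fconj_max_ellL (hfp : f pℓ = L) (hpℓ0 : 0 < pℓ) (hpℓ1 : pℓ ≤ 1) (x : ℝ) :
    ((pℓ * x - L : ℝ) : EReal) ≤ fconj (fun p => max (f p) (ellL L p)) x := by
  have := coe_mul_sub_le_fconj (fun p => max (f p) (ellL L p)) pℓ x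
  rwa [ellL, if_neg hpℓ0.not_ge, if_pos hpℓ1, hfp, max_self, ← EReal.coe_sub] at this

theorem fconj_max_ellL_le_max (hfp : f pℓ = L) (hpℓ1 : pℓ ≤ 1) (hsub : qbar ∈ subdiffE f pℓ)
    (hq0 : 0 ≤ q) (hq : q ≤ qbar) :
    fconj (fun p => max (f p) (ellL L p)) q ≤ max 0 ((pℓ * q - L : ℝ) : EReal) := by
  refine iSup_le fun p => ?_
  rcases le_or_gt p 0 with hp0 | hp0
  · have hg : ((0 : ℝ) : EReal) ≤ max (f p) (ellL L p) := by simp [ellL, hp0]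
    exact le_max_of_le_left ((coe_sub_le_coe_sub hg).trans
      (EReal.coe_nonpos.2 (by nlinarith)))
  rcases le_or_gt p pℓ with hp | hp
  · have hg : (L : EReal) ≤ max (f p) (ellL L p) := by
      simp [ellL, hp0.not_ge, hp.trans hpℓ1]
    exact le_max_of_le_right ((coe_sub_le_coe_sub hg).trans
      (EReal.coe_le_coe_iff.2 (by nlinarith)))
  · have hg : ((L + qbar * (p - pℓ) : ℝ) : EReal) ≤ max (f p) (ellL L p) := by
      have := hsub p
      rw [hfp, ← EReal.coe_add] at this
      exact le_max_of_le_left this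
    exact le_max_of_le_right ((coe_sub_le_coe_sub hg).trans
      (EReal.coe_le_coe_iff.2 (by nlinarith)))

theorem fconj_le_fconj_max_ellL (hmono : Monotone f) (htop : ∀ p : ℝ, 1 < p → f p = ⊤)
    (hfp : f pℓ = L) (hpℓ0 : 0 < pℓ) (hpℓ1 : pℓ ≤ 1) (hsub : qbar ∈ subdiffE f pℓ) (hq : qbar ≤ q) :
    fconj f q ≤ fconj (fun p => max (f p) (ellL L p)) q := by
  refine iSup_le fun p => ?_
  rcases le_or_gt pℓ p with hp | hp
  · rw [← max_ellL_eq_left hmono htop hfp hpℓ0 hp]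
    exact coe_mul_sub_le_fconj (fun p => max (f p) (ellL L p)) p q
  · have hf : ((L + qbar * (p - pℓ) : ℝ) : EReal) ≤ f p := by
      have := hsub p
      rwa [hfp, ← EReal.coe_add] at this
    refine (coe_sub_le_coe_sub hf).trans (le_trans ?_
      (coe_mul_sub_le_fconj_max_ellL hfp hpℓ0 hpℓ1 q))
    exact EReal.coe_le_coe_iff.2 (by nlinarith)

theorem fconj_max_ellL_eq_max (hf0 : f 0 = 0) (hfp : f pℓ = L) (hpℓ0 : 0 < pℓ) (hpℓ1 : pℓ ≤ 1)
    (hsub : qbar ∈ subdiffE f pℓ) (hq0 : 0 ≤ q) (hq : q ≤ qbar) :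
    fconj (fun p => max (f p) (ellL L p)) q = max 0 ((pℓ * q - L : ℝ) : EReal) :=
  (fconj_max_ellL_le_max hfp hpℓ1 hsub hq0 hq).antisymm
    (max_le (fconj_max_ellL_nonneg hf0 q) (coe_mul_sub_le_fconj_max_ellL hfp hpℓ0 hpℓ1 q))

theorem fconj_max_ellL_eq_zero (hf0 : f 0 = 0) (hfp : f pℓ = L) (hpℓ0 : 0 < pℓ) (hpℓ1 : pℓ ≤ 1)
    (hsub : qbar ∈ subdiffE f pℓ) (hqbar : L / pℓ ≤ qbar) (hq0 : 0 ≤ q) (hq : q ≤ L / pℓ) :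
    fconj (fun p => max (f p) (ellL L p)) q = 0 := by
  rw [fconj_max_ellL_eq_max hf0 hfp hpℓ0 hpℓ1 hsub hq0 (hq.trans hqbar), max_eq_left]
  rw [le_div_iff₀ hpℓ0] at hq
  exact EReal.coe_nonpos.2 (by linarith)

theorem fconj_max_ellL_eq_line (hL : 0 ≤ L) (hf0 : f 0 = 0) (hfp : f pℓ = L) (hpℓ0 : 0 < pℓ)
    (hpℓ1 : pℓ ≤ 1) (hsub : qbar ∈ subdiffE f pℓ) (hq0 : L / pℓ ≤ q) (hq : q ≤ qbar) :
    fconj (fun p => max (f p) (ellL L p)) q = ((pℓ * q - L : ℝ) : EReal) := by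
  rw [fconj_max_ellL_eq_max hf0 hfp hpℓ0 hpℓ1 hsub ((div_nonneg hL hpℓ0.le).trans hq0) hq,
    max_eq_right]
  rw [div_le_iff₀ hpℓ0] at hq0
  exact EReal.coe_nonneg.2 (by linarith)

end ConjugateOfMaxEllL

/-- **Proof of Lemma 3.2** (one-sided derivatives of `κ := (f ∨ ℓ_L)^♯` in the case
`L > 0 < f 1 - L`): with `p_ℓ := min(sup{p : f p = L},1)`, `q_ℓ := L/p_ℓ` and
`q̄ := D⁺f(p_ℓ)`, for `q ≥ 0` the right derivative of `κ` is `0` on `[0,q_ℓ)`, `p_ℓ` on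
`[q_ℓ, q̄)` and `D⁺f^♯(q)` on `[q̄,∞)`; for `q > 0` the left derivative of `κ` is `0` on
`(0,q_ℓ]`, `p_ℓ` on `(q_ℓ, q̄]` and `D⁻f^♯(q)` on `(q̄,∞)`. -/
theorem one_sided_derivs_conj_max_ellL
    (L : ℝ) (hL : 0 < L) (f : ℝ → EReal)
    (hpos : ∀ p, 0 ≤ f p) (hconv : ConvexE f) (hmono : Monotone f) (hf0 : f 0 = 0)
    (hfin : ∀ p : ℝ, p ≤ 1 → f p ≠ ⊤) (hcont : ContinuousOn f (Set.Iic 1))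
    (htop : ∀ p : ℝ, 1 < p → f p = ⊤) (hf1 : (L : EReal) < f 1)
    (pℓ qℓ : ℝ)
    (hpℓ : pℓ = min (sSup {p : ℝ | f p = (L : EReal)}) 1)
    (hqℓ : qℓ = L / pℓ) :
    (∀ q : ℝ, 0 ≤ q →
      (q < qℓ → rightDE (fconj (fun p => max (f p) (ellL L p))) q = 0) ∧
      (qℓ ≤ q → (q : EReal) < rightDE f pℓ →
        rightDE (fconj (fun p => max (f p) (ellL L p))) q = (pℓ : EReal)) ∧
      (rightDE f pℓ ≤ (q : EReal) →
        rightDE (fconj (fun p => max (f p) (ellL L p))) q = rightDE (fconj f) q)) ∧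
    (∀ q : ℝ, 0 < q →
      (q ≤ qℓ → leftDE (fconj (fun p => max (f p) (ellL L p))) q = 0) ∧
      (qℓ < q → (q : EReal) ≤ rightDE f pℓ →
        leftDE (fconj (fun p => max (f p) (ellL L p))) q = (pℓ : EReal)) ∧
      (rightDE f pℓ < (q : EReal) →
        leftDE (fconj (fun p => max (f p) (ellL L p))) q = leftDE (fconj f) q)) := by
  subst hqℓ
  set κ := fconj (fun p => max (f p) (ellL L p))
  have hbot : ∀ p, f p ≠ ⊥ := fun p => ne_bot_of_le_ne_bot EReal.zero_ne_bot (hpos p)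
  obtain ⟨⟨hpℓ0, hpℓ1⟩, hfpℓ⟩ := hpℓ ▸ min_sSup_setOf_eq_coe_spec hL hmono hf0 hcont htop hf1
  obtain ⟨qbar, hqbar, hqℓqbar⟩ := hconv.exists_rightDE_eq_coe hbot hpℓ0 hpℓ1 (ya := 0)
    (by exact_mod_cast hf0) hfpℓ (hfin 1 le_rfl)
  rw [sub_zero, sub_zero] at hqℓqbar
  have hsub := hconv.mem_subdiffE_of_rightDE_eq hbot hfpℓ hqbar
  have hzero {q : ℝ} := fconj_max_ellL_eq_zero (q := q) hf0 hfpℓ hpℓ0 hpℓ1.le hsub hqℓqbar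
  have hlin {q : ℝ} := fconj_max_ellL_eq_line (q := q) hL.le hf0 hfpℓ hpℓ0 hpℓ1.le hsub
  have hnonneg x : ((0 * x - 0 : ℝ) : EReal) ≤ κ x := by simpa using fconj_max_ellL_nonneg hf0 x
  have hline := coe_mul_sub_le_fconj_max_ellL hfpℓ hpℓ0 hpℓ1.le
  have hκf x : κ x ≤ fconj f x := fconj_le_fconj (fun p => le_max_left _ _) x
  have heq : EqOn κ (fconj f) (Ici qbar) := fun q hq =>
    (hκf q).antisymm (fconj_le_fconj_max_ellL hmono htop hfpℓ hpℓ0 hpℓ1.le hsub hq)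
  simp only [hqbar, EReal.coe_lt_coe_iff, EReal.coe_le_coe_iff]
  refine ⟨fun q hq => ⟨fun hlt => ?_, fun hge hlt => ?_, fun hge => ?_⟩,
    fun q hq => ⟨fun hle => ?_, fun hgt hle => ?_, fun hgt => ?_⟩⟩
  · exact_mod_cast rightDE_eq_of_le_line hlt hnonneg (by simpa using hzero hq hlt.le)
      (by simpa using hzero (hq.trans hlt.le) le_rfl)
  · exact rightDE_eq_of_le_line hlt hline (hlin hge hlt.le) (hlin (hge.trans hlt.le) le_rfl)
  · exact rightDE_congr_of_eqOn_Ici fun x hx => heq (hge.trans hx)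
  · exact_mod_cast leftDE_eq_of_le_line hq hnonneg (by simpa using hzero le_rfl (hq.le.trans hle))
      (by simpa using hzero hq.le hle)
  · exact leftDE_eq_of_le_line hgt hline (hlin le_rfl (hgt.le.trans hle)) (hlin hgt.le hle)
  · refine leftDE_congr_of_eqOn_Icc hgt hline (fun x => (hline x).trans (hκf x))
      (hlin hqℓqbar le_rfl) ?_ fun x hx => heq hx.1
    exact ne_top_of_le_ne_top (EReal.coe_ne_top q)
      ((hκf q).trans (fconj_le_of_nonneg_of_eq_top hpos htop hq.le))
end
end

section
/- Let W : ℝ → [0,∞] be convex with W(0) = 0 and W(q) = +∞ for every q < 0, and suppose that the map δ(q) := q − W(q) is non-decreasing on [0,∞) and converges to some V ∈ ℝ as q → ∞. Then: 0 ≤ W^♯(p) ≤ W^♯(1) = V for every p ≤ 1; W^♯(p) = +∞ for every p > 1; and W^♯ is continuous on (-∞,1]. -/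
open scoped Classical
noncomputable section

/-- **Deterministic core of Lemma 3.3**: if `δ(q) = q - W q` is non-decreasing on
`[0,∞)` and converges to `V ∈ ℝ`, then `0 ≤ W^♯(p) ≤ W^♯(1) = V` for `p ≤ 1`,
`W^♯(p) = +∞` for `p > 1`, and `W^♯` is continuous on `(-∞,1]`. -/
theorem conj_bounds_of_slope_limit
    (W : ℝ → EReal) (hpos : ∀ q, 0 ≤ W q) (hconv : ConvexE W) (hW0 : W 0 = 0)
    (htop : ∀ q : ℝ, q < 0 → W q = ⊤) (V : ℝ)
    (hδmono : ∀ q q' : ℝ, 0 ≤ q → q ≤ q' → (q : EReal) - W q ≤ (q' : EReal) - W q')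
    (hδlim : Filter.Tendsto (fun q : ℝ => (q : EReal) - W q) Filter.atTop
      (nhds (V : EReal))) :
    (∀ p : ℝ, p ≤ 1 → 0 ≤ fconj W p ∧ fconj W p ≤ fconj W 1) ∧
    fconj W 1 = (V : EReal) ∧
    (∀ p : ℝ, 1 < p → fconj W p = ⊤) ∧
    ContinuousOn (fconj W) (Set.Iic 1) := by
  -- finiteness of W on [0,∞)
  have hWbot : ∀ x : ℝ, W x ≠ ⊥ := fun x =>
    (lt_of_lt_of_le (by simp : (⊥:EReal) < 0) (hpos x)).ne'
  have hWtop : ∀ x : ℝ, 0 ≤ x → W x ≠ ⊤ := by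
    intro x hx hW
    have h := hδmono 0 x le_rfl hx
    rw [hW0, hW] at h
    simp at h
  set w : ℝ → ℝ := fun x => (W x).toReal with hwdef
  have hWeq : ∀ x : ℝ, 0 ≤ x → W x = ((w x : ℝ) : EReal) := fun x hx =>
    (EReal.coe_toReal (hWtop x hx) (hWbot x)).symm
  have hδcoe : ∀ x : ℝ, 0 ≤ x → (x : EReal) - W x = ((x - w x : ℝ) : EReal) := by
    intro x hx; rw [hWeq x hx, ← EReal.coe_sub]
  have hw0 : w 0 = 0 := by simp [hwdef, hW0]
  have hwnn : ∀ x : ℝ, 0 ≤ x → 0 ≤ w x := by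
    intro x hx
    have := hpos x
    rw [hWeq x hx] at this
    exact_mod_cast this
  have hwle : ∀ x : ℝ, 0 ≤ x → w x ≤ x := by
    intro x hx
    have h := hδmono 0 x le_rfl hx
    rw [hW0, hδcoe x hx] at h
    simp only [EReal.coe_zero, sub_zero] at h
    have : (0:ℝ) ≤ x - w x := by exact_mod_cast h
    linarith
  have hδleV : ∀ x : ℝ, 0 ≤ x → x - w x ≤ V := by
    intro x hx
    have h : (x:EReal) - W x ≤ (V:EReal) :=
      ge_of_tendsto hδlim (Filter.eventually_atTop.2 ⟨x, fun q hq => hδmono x q hx hq⟩)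
    rw [hδcoe x hx] at h
    exact_mod_cast h
  have hV0 : 0 ≤ V := by have := hδleV 0 le_rfl; rw [hw0] at this; linarith
  -- term bounds
  have hterm : ∀ p x : ℝ, ((x * p : ℝ) : EReal) - W x ≤ fconj W p := fun p x =>
    le_iSup (fun x : ℝ => ((x * p : ℝ) : EReal) - W x) x
  have hf0 : ∀ p : ℝ, 0 ≤ fconj W p := by
    intro p
    have := hterm p 0
    simpa [hW0] using this
  have hfleV : ∀ p : ℝ, p ≤ 1 → fconj W p ≤ (V : EReal) := by
    intro p hp
    refine iSup_le fun x => ?_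
    by_cases hx : 0 ≤ x
    · rw [hWeq x hx, ← EReal.coe_sub]
      have : x * p - w x ≤ V := by nlinarith [hδleV x hx, mul_nonneg hx (sub_nonneg.2 hp)]
      exact_mod_cast this
    · rw [htop x (lt_of_not_ge hx)]
      have hb : ((x * p : ℝ) : EReal) - ⊤ = ⊥ := by simp
      rw [hb]; exact bot_le
  have hmono : ∀ p p' : ℝ, p ≤ p' → fconj W p ≤ fconj W p' := by
    intro p p' hpp
    refine iSup_le fun x => ?_
    by_cases hx : 0 ≤ x
    · refine le_trans ?_ (hterm p' x)
      rw [hWeq x hx, ← EReal.coe_sub, ← EReal.coe_sub]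
      have : x * p - w x ≤ x * p' - w x := by nlinarith [mul_le_mul_of_nonneg_left hpp hx]
      exact_mod_cast this
    · rw [htop x (lt_of_not_ge hx)]
      have hb : ((x * p : ℝ) : EReal) - ⊤ = ⊥ := by simp
      rw [hb]; exact bot_le
  have hftopne : ∀ p : ℝ, p ≤ 1 → fconj W p ≠ ⊤ := fun p hp =>
    ne_top_of_le_ne_top (EReal.coe_ne_top V) (hfleV p hp)
  have hfbotne : ∀ p : ℝ, fconj W p ≠ ⊥ := fun p =>
    (lt_of_lt_of_le (by simp : (⊥:EReal) < 0) (hf0 p)).ne'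
  set g : ℝ → ℝ := fun p => (fconj W p).toReal with hgdef
  have hgeq : ∀ p : ℝ, p ≤ 1 → fconj W p = ((g p : ℝ) : EReal) := fun p hp =>
    (EReal.coe_toReal (hftopne p hp) (hfbotne p)).symm
  have hg0 : ∀ p : ℝ, p ≤ 1 → 0 ≤ g p := by
    intro p hp
    have := hf0 p
    rw [hgeq p hp] at this
    exact_mod_cast this
  have hgV : ∀ p : ℝ, p ≤ 1 → g p ≤ V := by
    intro p hp
    have := hfleV p hp
    rw [hgeq p hp] at this
    exact_mod_cast this
  have hgmono : ∀ p p' : ℝ, p ≤ p' → p' ≤ 1 → g p ≤ g p' := by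
    intro p p' h h1
    have := hmono p p' h
    rw [hgeq p (h.trans h1), hgeq p' h1] at this
    exact_mod_cast this
  have htermg : ∀ p x : ℝ, p ≤ 1 → 0 ≤ x → x * p - w x ≤ g p := by
    intro p x hp hx
    have := hterm p x
    rw [hWeq x hx, ← EReal.coe_sub, hgeq p hp] at this
    exact_mod_cast this
  -- fconj W 1 = V
  have hf1 : fconj W 1 = (V : EReal) := by
    refine le_antisymm (hfleV 1 le_rfl) ?_
    refine le_of_tendsto hδlim (Filter.eventually_atTop.2 ⟨0, fun q _ => ?_⟩)
    simpa using hterm 1 q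
  have hg1 : g 1 = V := by
    have := hgeq 1 le_rfl
    rw [hf1] at this
    exact_mod_cast this.symm
  -- p > 1 ⇒ ⊤
  have hgt : ∀ p : ℝ, 1 < p → fconj W p = ⊤ := by
    intro p hp
    rw [EReal.eq_top_iff_forall_lt]
    intro M
    set x : ℝ := max 0 ((M + 1) / (p - 1)) with hxdef
    have hx : 0 ≤ x := le_max_left _ _
    have h1 : (M + 1) / (p - 1) ≤ x := le_max_right _ _
    have hp1 : 0 < p - 1 := by linarith
    have hxp : M + 1 ≤ x * (p - 1) := by
      have := mul_le_mul_of_nonneg_right h1 hp1.le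
      rwa [div_mul_cancel₀ _ hp1.ne'] at this
    refine lt_of_lt_of_le ?_ (hterm p x)
    rw [hWeq x hx, ← EReal.coe_sub]
    have : M < x * p - w x := by nlinarith [hwle x hx]
    exact_mod_cast this
  -- key quantitative inequality
  have hkey : ∀ p p' : ℝ, p < 1 → p ≤ p' → p' ≤ 1 →
      g p' ≤ g p + (p' - p) / (1 - p) * V := by
    intro p p' hp hpp hp1
    set t : ℝ := (p' - p) / (1 - p) with htdef
    have h1p : 0 < 1 - p := by linarith
    have ht0 : 0 ≤ t := div_nonneg (by linarith) h1p.le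
    have ht1 : t ≤ 1 := by rw [htdef, div_le_one h1p]; linarith
    have htp : t * (1 - p) = p' - p := div_mul_cancel₀ _ h1p.ne'
    have hle : fconj W p' ≤ ((g p + t * V : ℝ) : EReal) := by
      refine iSup_le fun x => ?_
      by_cases hx : 0 ≤ x
      · rw [hWeq x hx, ← EReal.coe_sub]
        refine EReal.coe_le_coe_iff.mpr ?_
        have h1 := htermg p x hp.le hx
        have h2 := hδleV x hx
        have h3 := hg0 p hp.le
        have hxid : x * p' = x * p + x * (t * (1 - p)) := by rw [htp]; ring
        nlinarith [mul_nonneg ht0 h3, mul_nonneg ht0 (sub_nonneg.2 h2),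
          mul_nonneg (sub_nonneg.2 ht1) (sub_nonneg.2 h1)]
      · rw [htop x (lt_of_not_ge hx)]
        have hb : ((x * p' : ℝ) : EReal) - ⊤ = ⊥ := by simp
        rw [hb]; exact bot_le
    rw [hgeq p' hp1] at hle
    exact_mod_cast hle
  -- sup of g on (-∞,1) is V
  have hsup1 : ∀ c : ℝ, c < V → ∃ p : ℝ, p < 1 ∧ c ≤ g p := by
    intro c hc
    have hev : ∀ᶠ q : ℝ in Filter.atTop, (c : EReal) < (q : EReal) - W q :=
      hδlim.eventually (eventually_gt_nhds (by exact_mod_cast hc))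
    obtain ⟨x, hx1, hx2⟩ := (hev.and (Filter.eventually_ge_atTop 1)).exists
    have hx0 : (0:ℝ) < x := lt_of_lt_of_le one_pos hx2
    have hcx : c < x - w x := by
      rw [hδcoe x hx0.le] at hx1
      exact_mod_cast hx1
    set p : ℝ := 1 - (x - w x - c) / (2 * x) with hpdef
    have hd : 0 < (x - w x - c) / (2 * x) := div_pos (by linarith) (by linarith)
    have hplt : p < 1 := by rw [hpdef]; linarith
    refine ⟨p, hplt, ?_⟩
    have hterm' := htermg p x hplt.le hx0.le
    have hxp : x * p = x - (x - w x - c) / 2 := by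
      rw [hpdef]; field_simp
    rw [hxp] at hterm'
    linarith
  -- continuity of g on Iic 1
  have hgcont : ContinuousOn g (Set.Iic 1) := by
    intro p₀ hp₀
    rw [Metric.continuousWithinAt_iff]
    intro ε hε
    rcases lt_or_eq_of_le (Set.mem_Iic.mp hp₀) with h1 | h1
    · -- interior point
      have h1p₀ : 0 < 1 - p₀ := by linarith
      have hVp : 0 < V + 1 := by linarith
      refine ⟨(1 - p₀) * ε / (V + 1), by positivity, ?_⟩
      intro p hp hdist
      have hp1 : p ≤ 1 := hp
      rw [Real.dist_eq] at hdist ⊢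
      have habs := abs_lt.mp hdist
      have hbound : ∀ a b : ℝ, a ≤ b → b ≤ 1 → a < 1 →
          b - a < (1 - p₀) * ε / (V + 1) → 1 - p₀ ≤ 1 - a → g b - g a < ε := by
        intro a b hab hb1 ha1 hba h1a
        have hk := hkey a b ha1 hab hb1
        have hdiv : (b - a) / (1 - a) * V ≤ (b - a) / (1 - p₀) * V := by
          apply mul_le_mul_of_nonneg_right _ hV0
          exact div_le_div_of_nonneg_left (by linarith) h1p₀ h1a
        have hcance : (1 - p₀) * ε / (V + 1) * (V + 1) = (1 - p₀) * ε :=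
          div_mul_cancel₀ _ hVp.ne'
        have h2 : (b - a) * (V + 1) < (1 - p₀) * ε := by
          rw [← hcance]; exact mul_lt_mul_of_pos_right hba hVp
        have h3 : (b - a) * V < (1 - p₀) * ε := by nlinarith
        have hεV : (b - a) / (1 - p₀) * V < ε := by
          rw [div_mul_eq_mul_div, div_lt_iff₀ h1p₀]; linarith
        linarith
      rcases le_or_gt p₀ p with hle | hlt
      · have h4 := hbound p₀ p hle hp1 h1 habs.2 le_rfl
        have h5 : 0 ≤ g p - g p₀ := by linarith [hgmono p₀ p hle hp1]
        rw [abs_of_nonneg h5]; exact h4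
      · have h4 := hbound p p₀ hlt.le h1.le (hlt.trans h1) (by linarith [habs.1])
          (by linarith)
        have h5 : g p - g p₀ ≤ 0 := by linarith [hgmono p p₀ hlt.le h1.le]
        rw [abs_of_nonpos h5]; linarith
    · -- p₀ = 1
      subst h1
      obtain ⟨p₁, hp₁lt, hp₁ge⟩ := hsup1 (V - ε / 2) (by linarith)
      refine ⟨1 - p₁, by linarith, ?_⟩
      intro p hp hdist
      have hp1 : p ≤ 1 := hp
      rw [Real.dist_eq] at hdist ⊢
      have habs := abs_lt.mp hdist
      have hpge : p₁ ≤ p := by linarith [habs.1]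
      have hgp : V - ε / 2 ≤ g p := le_trans hp₁ge (hgmono p₁ p hpge hp1)
      have hgpV : g p ≤ V := hgV p hp1
      rw [hg1, abs_lt]
      constructor <;> linarith
  -- assemble
  refine ⟨fun p hp => ⟨hf0 p, by rw [hf1]; exact hfleV p hp⟩, hf1, hgt, ?_⟩
  exact (continuous_coe_real_ereal.comp_continuousOn hgcont).congr fun p hp => hgeq p hp
end
end

section
/- Let (Ω, F, μ) be a probability space, Q : Ω → (0,∞) a measurable map, and h : Ω × [0,∞) → [0,∞) a jointly measurable map such that for μ-a.e. ω: h(ω,·) is convex and non-decreasing, h(ω,0) = 0, and the right derivative satisfies 0 ≤ D⁺h(ω,r) ≤ 1 for all r ≥ 0. Define W(q) := ∫_Ω h(ω, q·Q(ω))/Q(ω) μ(dω) for q ≥ 0. Then W is finite (indeed 0 ≤ W(q) ≤ q), convex and non-decreasing, with W(0) = 0, and: D⁺W(q) = ∫_Ω D⁺h(ω, q·Q(ω)) μ(dω) for every q ≥ 0, and D⁻W(q) = ∫_Ω D⁻h(ω, q·Q(ω)) μ(dω) for every q > 0, where D⁻h(ω,·) denotes the left derivative of h(ω,·) on (0,∞).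 Moreover, if for μ-a.e. ω one has lim_{r→∞} D⁺h(ω,r) = 1, then lim_{q→∞} D⁺W(q) = 1. -/
/-!
A difference quotient of `W` at `q` is the `μ`-average of the difference quotients of `h ω` at
`q * Q ω`: the factor `1 / Q ω` in `W` exactly compensates the rescaling of the increment by
`Q ω`. Since `h ω` is convex, nondecreasing and has right derivative at most `1`, these quotients
lie in `[0, 1]` and converge monotonically to the one-sided derivatives of `h ω`, so dominated
convergence passes the limit under the integral. The same domination gives `D⁺W(q) → 1`.
-/

open MeasureTheory
noncomputable section

/-- Right derivative of `g : ℝ → ℝ` at `r`: the infimum of the right slopes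
`(g (r+h) - g r)/h` over `h > 0`. -/
def rightD (g : ℝ → ℝ) (r : ℝ) : ℝ :=
  sInf ((fun h : ℝ => (g (r + h) - g r) / h) '' Set.Ioi (0 : ℝ))

/-- Left derivative (within `[0,∞)`) of `g : ℝ → ℝ` at `r > 0`: the supremum of the
left slopes `(g r - g (r-h))/h` over `0 < h ≤ r`. -/
def leftD (g : ℝ → ℝ) (r : ℝ) : ℝ :=
  sSup ((fun h : ℝ => (g r - g (r - h)) / h) '' Set.Ioc (0 : ℝ) r)

open Set Filter Topology

section OneSidedDerivatives

variable {g : ℝ → ℝ} {a b r : ℝ}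

theorem rightD_eq_sInf_slope (g : ℝ → ℝ) (r : ℝ) : rightD g r = sInf (slope g r '' Ioi r) := by
  rw [rightD, ← add_zero r, ← image_const_add_Ioi, image_image, add_zero]
  congr 1
  refine image_congr fun t _ => ?_
  rw [slope_def_field, add_sub_cancel_left]

theorem leftD_eq_sSup_slope (g : ℝ → ℝ) (r : ℝ) : leftD g r = sSup (slope g r '' Ico 0 r) := by
  have hIco : Ico 0 r = (r - ·) '' Ioc 0 r := by simp
  rw [leftD, hIco, image_image]
  congr 1
  refine image_congr fun t _ => ?_
  rw [slope_def_field, sub_sub_cancel_left, div_neg, ← neg_div, neg_sub]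

theorem ConvexOn.tendsto_slope_rightD (hg : ConvexOn ℝ (Ici 0) g)
    (hmono : MonotoneOn g (Ici 0)) (hr : 0 ≤ r) :
    Tendsto (slope g r) (𝓝[>] r) (𝓝 (rightD g r)) := by
  have hsub : Ioi r ⊆ Ici 0 \ {r} := fun x hx => ⟨hr.trans (le_of_lt hx), ne_of_gt hx⟩
  rw [rightD_eq_sInf_slope]
  refine ((hg.slope_mono hr).mono hsub).tendsto_nhdsGT ⟨0, ?_⟩
  rintro _ ⟨x, hx, rfl⟩
  exact hmono.slope_nonneg hr (hsub hx).1

theorem ConvexOn.tendsto_slope_leftD (hg : ConvexOn ℝ (Ici 0) g) (hr : 0 < r) :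
    Tendsto (slope g r) (𝓝[<] r) (𝓝 (leftD g r)) := by
  have hmono : MonotoneOn (slope g r) (Ico 0 r) :=
    (hg.slope_mono hr.le).mono fun x hx => ⟨hx.1, hx.2.ne⟩
  have hbdd : BddAbove (slope g r '' Ico 0 r) := by
    refine ⟨slope g r (r + 1), ?_⟩
    rintro _ ⟨x, hx, rfl⟩
    exact hg.slope_mono hr.le ⟨hx.1, hx.2.ne⟩ ⟨by simp only [mem_Ici]; linarith, by simp⟩
      (by linarith [hx.2])
  rw [leftD_eq_sSup_slope, ← hmono.csSup_eq_of_subset_of_forall_exists_le hbdd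
    Ioo_subset_Ico_self fun y hy => ⟨(y + r) / 2, ⟨by linarith [hy.1], by linarith [hy.2]⟩,
      by linarith [hy.2]⟩]
  exact (hmono.mono Ioo_subset_Ico_self).tendsto_nhdsWithin_Ioo_left (nonempty_Ioo.2 hr)
    (hbdd.mono (image_mono Ioo_subset_Ico_self))

theorem ConvexOn.slope_le_rightD (hg : ConvexOn ℝ (Ici 0) g) (ha : 0 ≤ a) (hab : a < b) :
    slope g a b ≤ rightD g b := by
  refine le_csInf ⟨_, 1, mem_Ioi.2 zero_lt_one, rfl⟩ ?_
  rintro _ ⟨t, ht, rfl⟩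
  have := hg.slope_mono_adjacent ha (by simp only [mem_Ici]; linarith [mem_Ioi.1 ht]) hab
    (lt_add_of_pos_right b ht)
  rwa [add_sub_cancel_left, ← slope_def_field] at this

end OneSidedDerivatives

structure UnitSlopeConvex (g : ℝ → ℝ) : Prop where
  convexOn : ConvexOn ℝ (Ici 0) g
  monotoneOn : MonotoneOn g (Ici 0)
  map_zero : g 0 = 0
  rightD_le_one : ∀ r, 0 ≤ r → rightD g r ≤ 1

namespace UnitSlopeConvex

variable {g : ℝ → ℝ} {a b r : ℝ}

theorem slope_nonneg (hg : UnitSlopeConvex g) (ha : 0 ≤ a) (hb : 0 ≤ b) : 0 ≤ slope g a b :=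
  hg.monotoneOn.slope_nonneg ha hb

theorem slope_le_one (hg : UnitSlopeConvex g) (ha : 0 ≤ a) (hb : 0 ≤ b) : slope g a b ≤ 1 := by
  rcases lt_trichotomy a b with hab | rfl | hba
  · exact (hg.convexOn.slope_le_rightD ha hab).trans (hg.rightD_le_one b hb)
  · simp
  · rw [slope_comm]
    exact (hg.convexOn.slope_le_rightD hb hba).trans (hg.rightD_le_one a ha)

theorem norm_slope_le_one (hg : UnitSlopeConvex g) (ha : 0 ≤ a) (hb : 0 ≤ b) :
    ‖slope g a b‖ ≤ 1 := by
  rw [Real.norm_of_nonneg (hg.slope_nonneg ha hb)]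
  exact hg.slope_le_one ha hb

theorem nonneg (hg : UnitSlopeConvex g) (hr : 0 ≤ r) : 0 ≤ g r :=
  hg.map_zero ▸ hg.monotoneOn self_mem_Ici hr hr

theorem le_self (hg : UnitSlopeConvex g) (hr : 0 ≤ r) : g r ≤ r := by
  rcases hr.eq_or_lt with rfl | hr
  · exact hg.map_zero.le
  · simpa [slope_def_field, hg.map_zero, div_le_one hr] using hg.slope_le_one le_rfl hr.le

theorem rightD_nonneg (hg : UnitSlopeConvex g) (hr : 0 ≤ r) : 0 ≤ rightD g r :=
  ge_of_tendsto (hg.convexOn.tendsto_slope_rightD hg.monotoneOn hr)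
    (eventually_nhdsWithin_of_forall fun _ hx => hg.slope_nonneg hr (hr.trans (le_of_lt hx)))

theorem convexOn_perspective (hg : UnitSlopeConvex g) {c : ℝ} (hc : 0 < c) :
    ConvexOn ℝ (Ici 0) fun q => g (q * c) / c := by
  refine ⟨convex_Ici 0, fun x hx y hy s t hs ht hst => ?_⟩
  have hxc : x * c ∈ Ici (0 : ℝ) := mul_nonneg hx hc.le
  have hyc : y * c ∈ Ici (0 : ℝ) := mul_nonneg hy hc.le
  have := hg.convexOn.2 hxc hyc hs ht hst
  simp only [smul_eq_mul] at this ⊢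
  rw [div_le_iff₀ hc, show (s * x + t * y) * c = s * (x * c) + t * (y * c) by ring]
  exact this.trans_eq (by field_simp)

theorem monotoneOn_perspective (hg : UnitSlopeConvex g) {c : ℝ} (hc : 0 < c) :
    MonotoneOn (fun q => g (q * c) / c) (Ici 0) := fun _ hx _ hy hxy =>
  div_le_div_of_nonneg_right (hg.monotoneOn (mul_nonneg hx hc.le) (mul_nonneg hy hc.le)
    (mul_le_mul_of_nonneg_right hxy hc.le)) hc.le

end UnitSlopeConvex

section IntegralOfConvex

variable {Ω E : Type*} [MeasurableSpace Ω] {μ : Measure Ω} {s : Set E} {F : E → Ω → ℝ}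

theorem ConvexOn.integral [AddCommGroup E] [Module ℝ E] (hs : Convex ℝ s)
    (hF : ∀ᵐ ω ∂μ, ConvexOn ℝ s (F · ω)) (hint : ∀ x ∈ s, Integrable (F x) μ) :
    ConvexOn ℝ s fun x => ∫ ω, F x ω ∂μ := by
  refine ⟨hs, fun x hx y hy a b ha hb hab => ?_⟩
  calc ∫ ω, F (a • x + b • y) ω ∂μ ≤ ∫ ω, a * F x ω + b * F y ω ∂μ := by
        refine integral_mono_ae (hint _ (hs hx hy ha hb hab))
          (((hint x hx).const_mul a).add ((hint y hy).const_mul b)) ?_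
        filter_upwards [hF] with ω hω
        exact hω.2 hx hy ha hb hab
    _ = a • ∫ ω, F x ω ∂μ + b • ∫ ω, F y ω ∂μ := by
        rw [integral_add ((hint x hx).const_mul a) ((hint y hy).const_mul b), integral_const_mul,
          integral_const_mul, smul_eq_mul, smul_eq_mul]

theorem MonotoneOn.integral [Preorder E] (hF : ∀ᵐ ω ∂μ, MonotoneOn (F · ω) s)
    (hint : ∀ x ∈ s, Integrable (F x) μ) : MonotoneOn (fun x => ∫ ω, F x ω ∂μ) s :=
  fun x hx y hy hxy => integral_mono_ae (hint x hx) (hint y hy) <| by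
    filter_upwards [hF] with ω hω
    exact hω hx hy hxy

end IntegralOfConvex

section PerspectiveIntegral

variable {Ω : Type*} [MeasurableSpace Ω] {μ : Measure Ω} {Q : Ω → ℝ} {h : Ω → ℝ → ℝ} {p q : ℝ}

/-- The function `W` of the paper, a `μ`-average of the perspectives `q ↦ h ω (q * Q ω) / Q ω`. -/
def perspectiveIntegral (μ : Measure Ω) (Q : Ω → ℝ) (h : Ω → ℝ → ℝ) (q : ℝ) : ℝ :=
  ∫ ω, h ω (q * Q ω) / Q ω ∂μ

theorem perspectiveIntegral_zero (h0 : ∀ᵐ ω ∂μ, h ω 0 = 0) : perspectiveIntegral μ Q h 0 = 0 :=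
  integral_eq_zero_of_ae <| by
    filter_upwards [h0] with ω hω
    simp [hω]

theorem measurable_apply_mul (hQ : Measurable Q) (hmeas : Measurable fun x : Ω × ℝ => h x.1 x.2)
    (c : ℝ) : Measurable fun ω => h ω (c * Q ω) :=
  hmeas.comp (measurable_id.prodMk (hQ.const_mul c))

theorem measurable_slope_mul (hQ : Measurable Q) (hmeas : Measurable fun x : Ω × ℝ => h x.1 x.2)
    (p q : ℝ) : Measurable fun ω => slope (h ω) (q * Q ω) (p * Q ω) := by
  simp only [slope_def_field]
  exact ((measurable_apply_mul hQ hmeas p).sub (measurable_apply_mul hQ hmeas q)).div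
    ((hQ.const_mul p).sub (hQ.const_mul q))

variable (hQpos : ∀ ω, 0 < Q ω) (hh : ∀ᵐ ω ∂μ, UnitSlopeConvex (h ω))
include hQpos hh

theorem ae_tendsto_slope_mul_rightD (hq : 0 ≤ q) :
    ∀ᵐ ω ∂μ, Tendsto (fun p => slope (h ω) (q * Q ω) (p * Q ω)) (𝓝[>] q)
      (𝓝 (rightD (h ω) (q * Q ω))) := by
  filter_upwards [hh] with ω hω
  exact (hω.convexOn.tendsto_slope_rightD hω.monotoneOn (mul_nonneg hq (hQpos ω).le)).comp
    ((continuous_mul_const (Q ω)).continuousWithinAt.tendsto_nhdsWithin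
      fun _ hp => mul_lt_mul_of_pos_right hp (hQpos ω))

theorem ae_tendsto_slope_mul_leftD (hq : 0 < q) :
    ∀ᵐ ω ∂μ, Tendsto (fun p => slope (h ω) (q * Q ω) (p * Q ω)) (𝓝[<] q)
      (𝓝 (leftD (h ω) (q * Q ω))) := by
  filter_upwards [hh] with ω hω
  exact (hω.convexOn.tendsto_slope_leftD (mul_pos hq (hQpos ω))).comp
    ((continuous_mul_const (Q ω)).continuousWithinAt.tendsto_nhdsWithin
      fun _ hp => mul_lt_mul_of_pos_right hp (hQpos ω))

variable (hQ : Measurable Q) (hmeas : Measurable fun x : Ω × ℝ => h x.1 x.2)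
include hQ hmeas

theorem integrable_perspective [IsFiniteMeasure μ] (hp : 0 ≤ p) :
    Integrable (fun ω => h ω (p * Q ω) / Q ω) μ := by
  refine Integrable.mono' (integrable_const p)
    ((measurable_apply_mul hQ hmeas p).div hQ).aestronglyMeasurable ?_
  filter_upwards [hh] with ω hω
  have hpQ : 0 ≤ p * Q ω := mul_nonneg hp (hQpos ω).le
  rw [Real.norm_of_nonneg (div_nonneg (hω.nonneg hpQ) (hQpos ω).le), div_le_iff₀ (hQpos ω)]
  exact hω.le_self hpQ

theorem perspectiveIntegral_mem_Icc [IsProbabilityMeasure μ] (hp : 0 ≤ p) :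
    perspectiveIntegral μ Q h p ∈ Icc 0 p := by
  refine ⟨integral_nonneg_of_ae ?_, ?_⟩
  · filter_upwards [hh] with ω hω
    exact div_nonneg (hω.nonneg (mul_nonneg hp (hQpos ω).le)) (hQpos ω).le
  · calc perspectiveIntegral μ Q h p ≤ ∫ _, p ∂μ := by
          refine integral_mono_ae (integrable_perspective hQpos hh hQ hmeas hp)
            (integrable_const p) ?_
          filter_upwards [hh] with ω hω
          rw [div_le_iff₀ (hQpos ω)]
          exact hω.le_self (mul_nonneg hp (hQpos ω).le)
      _ = p := by simp

theorem convexOn_perspectiveIntegral [IsFiniteMeasure μ] :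
    ConvexOn ℝ (Ici 0) (perspectiveIntegral μ Q h) :=
  ConvexOn.integral (convex_Ici 0)
    (by filter_upwards [hh] with ω hω using hω.convexOn_perspective (hQpos ω))
    fun _ hp => integrable_perspective hQpos hh hQ hmeas hp

theorem monotoneOn_perspectiveIntegral [IsFiniteMeasure μ] :
    MonotoneOn (perspectiveIntegral μ Q h) (Ici 0) :=
  MonotoneOn.integral
    (by filter_upwards [hh] with ω hω using hω.monotoneOn_perspective (hQpos ω))
    fun _ hp => integrable_perspective hQpos hh hQ hmeas hp

theorem slope_perspectiveIntegral [IsFiniteMeasure μ] (hp : 0 ≤ p) (hq : 0 ≤ q) :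
    slope (perspectiveIntegral μ Q h) q p = ∫ ω, slope (h ω) (q * Q ω) (p * Q ω) ∂μ := by
  rw [slope_def_field, perspectiveIntegral, perspectiveIntegral,
    ← integral_sub (integrable_perspective hQpos hh hQ hmeas hp)
      (integrable_perspective hQpos hh hQ hmeas hq), ← integral_div]
  congr 1 with ω
  rw [slope_def_field, ← sub_div, div_div, ← sub_mul, mul_comm (Q ω)]

theorem tendsto_slope_perspectiveIntegral [IsFiniteMeasure μ] {l : Filter ℝ}
    [l.IsCountablyGenerated] {f : Ω → ℝ} (hq : 0 ≤ q) (hl : ∀ᶠ p in l, 0 ≤ p)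
    (hlim : ∀ᵐ ω ∂μ, Tendsto (fun p => slope (h ω) (q * Q ω) (p * Q ω)) l (𝓝 (f ω))) :
    Tendsto (slope (perspectiveIntegral μ Q h) q) l (𝓝 (∫ ω, f ω ∂μ)) := by
  refine (tendsto_integral_filter_of_dominated_convergence (fun _ => 1)
    (Eventually.of_forall fun p => (measurable_slope_mul hQ hmeas p q).aestronglyMeasurable)
    ?_ (integrable_const 1) hlim).congr' ?_
  · filter_upwards [hl] with p hp
    filter_upwards [hh] with ω hω
    exact hω.norm_slope_le_one (mul_nonneg hq (hQpos ω).le) (mul_nonneg hp (hQpos ω).le)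
  · filter_upwards [hl] with p hp using (slope_perspectiveIntegral hQpos hh hQ hmeas hp hq).symm

theorem rightD_perspectiveIntegral [IsFiniteMeasure μ] (hq : 0 ≤ q) :
    rightD (perspectiveIntegral μ Q h) q = ∫ ω, rightD (h ω) (q * Q ω) ∂μ :=
  tendsto_nhds_unique
    ((convexOn_perspectiveIntegral hQpos hh hQ hmeas).tendsto_slope_rightD
      (monotoneOn_perspectiveIntegral hQpos hh hQ hmeas) hq)
    (tendsto_slope_perspectiveIntegral hQpos hh hQ hmeas hq
      (eventually_nhdsWithin_of_forall fun _ hp => hq.trans (le_of_lt hp))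
      (ae_tendsto_slope_mul_rightD hQpos hh hq))

theorem leftD_perspectiveIntegral [IsFiniteMeasure μ] (hq : 0 < q) :
    leftD (perspectiveIntegral μ Q h) q = ∫ ω, leftD (h ω) (q * Q ω) ∂μ :=
  tendsto_nhds_unique
    ((convexOn_perspectiveIntegral hQpos hh hQ hmeas).tendsto_slope_leftD hq)
    (tendsto_slope_perspectiveIntegral hQpos hh hQ hmeas hq.le
      (by filter_upwards [Ioo_mem_nhdsLT hq] with p hp using hp.1.le)
      (ae_tendsto_slope_mul_leftD hQpos hh hq))

theorem aestronglyMeasurable_rightD_mul (hq : 0 ≤ q) :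
    AEStronglyMeasurable (fun ω => rightD (h ω) (q * Q ω)) μ :=
  (aemeasurable_of_tendsto_metrizable_ae (𝓝[>] q)
    (fun p => (measurable_slope_mul hQ hmeas p q).aemeasurable)
    (ae_tendsto_slope_mul_rightD hQpos hh hq)).aestronglyMeasurable

theorem tendsto_rightD_perspectiveIntegral_atTop [IsProbabilityMeasure μ]
    (hlim : ∀ᵐ ω ∂μ, Tendsto (rightD (h ω)) atTop (𝓝 1)) :
    Tendsto (rightD (perspectiveIntegral μ Q h)) atTop (𝓝 1) := by
  have key : Tendsto (fun q => ∫ ω, rightD (h ω) (q * Q ω) ∂μ) atTop (𝓝 (∫ _, (1 : ℝ) ∂μ)) := by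
    refine tendsto_integral_filter_of_dominated_convergence (fun _ => 1) ?_ ?_
      (integrable_const 1) ?_
    · filter_upwards [eventually_ge_atTop 0] with q hq
      exact aestronglyMeasurable_rightD_mul hQpos hh hQ hmeas hq
    · filter_upwards [eventually_ge_atTop 0] with q hq
      filter_upwards [hh] with ω hω
      have hqQ : 0 ≤ q * Q ω := mul_nonneg hq (hQpos ω).le
      rw [Real.norm_of_nonneg (hω.rightD_nonneg hqQ)]
      exact hω.rightD_le_one _ hqQ
    · filter_upwards [hlim] with ω hω
      exact hω.comp (tendsto_id.atTop_mul_const (hQpos ω))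
  rw [integral_const, probReal_univ, one_smul] at key
  refine key.congr' ?_
  filter_upwards [eventually_ge_atTop 0] with q hq
  exact (rightD_perspectiveIntegral hQpos hh hQ hmeas hq).symm

end PerspectiveIntegral

theorem deriv_under_integral_convex_general
    {Ω : Type*} {m0 : MeasurableSpace Ω} (μ : Measure Ω) [IsProbabilityMeasure μ]
    (Q : Ω → ℝ) (hQmeas : Measurable Q) (hQpos : ∀ ω, 0 < Q ω)
    (h : Ω → ℝ → ℝ)
    (hmeas : Measurable fun p : Ω × ℝ => h p.1 p.2)
    (hconv : ∀ᵐ ω ∂μ, ConvexOn ℝ (Set.Ici 0) (h ω))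
    (hmono : ∀ᵐ ω ∂μ, MonotoneOn (h ω) (Set.Ici 0))
    (h0 : ∀ᵐ ω ∂μ, h ω 0 = 0)
    (hD : ∀ᵐ ω ∂μ, ∀ r : ℝ, 0 ≤ r → 0 ≤ rightD (h ω) r ∧ rightD (h ω) r ≤ 1) :
    (∀ q : ℝ, 0 ≤ q →
      0 ≤ (∫ ω, h ω (q * Q ω) / Q ω ∂μ) ∧ (∫ ω, h ω (q * Q ω) / Q ω ∂μ) ≤ q) ∧
    ConvexOn ℝ (Set.Ici 0) (fun q : ℝ => ∫ ω, h ω (q * Q ω) / Q ω ∂μ) ∧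
    MonotoneOn (fun q : ℝ => ∫ ω, h ω (q * Q ω) / Q ω ∂μ) (Set.Ici 0) ∧
    (∫ ω, h ω (0 * Q ω) / Q ω ∂μ) = 0 ∧
    (∀ q : ℝ, 0 ≤ q →
      rightD (fun q' : ℝ => ∫ ω, h ω (q' * Q ω) / Q ω ∂μ) q
        = ∫ ω, rightD (h ω) (q * Q ω) ∂μ) ∧
    (∀ q : ℝ, 0 < q →
      leftD (fun q' : ℝ => ∫ ω, h ω (q' * Q ω) / Q ω ∂μ) q
        = ∫ ω, leftD (h ω) (q * Q ω) ∂μ) ∧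
    ((∀ᵐ ω ∂μ, Filter.Tendsto (fun r : ℝ => rightD (h ω) r) Filter.atTop (nhds 1)) →
      Filter.Tendsto (fun q : ℝ => rightD (fun q' : ℝ => ∫ ω, h ω (q' * Q ω) / Q ω ∂μ) q)
        Filter.atTop (nhds 1)) := by
  have hh : ∀ᵐ ω ∂μ, UnitSlopeConvex (h ω) := by
    filter_upwards [hconv, hmono, h0, hD] with ω hc hm hz hd
    exact ⟨hc, hm, hz, fun r hr => (hd r hr).2⟩
  exact ⟨fun q hq => perspectiveIntegral_mem_Icc hQpos hh hQmeas hmeas hq,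
    convexOn_perspectiveIntegral hQpos hh hQmeas hmeas,
    monotoneOn_perspectiveIntegral hQpos hh hQmeas hmeas,
    perspectiveIntegral_zero h0,
    fun q hq => rightD_perspectiveIntegral hQpos hh hQmeas hmeas hq,
    fun q hq => leftD_perspectiveIntegral hQpos hh hQmeas hmeas hq,
    tendsto_rightD_perspectiveIntegral_atTop hQpos hh hQmeas hmeas⟩

/-- **Analytic core of Lemma 3.2**: for `W(q) := ∫ h(ω, q·Q(ω))/Q(ω) dμ(ω)` with
`h(ω,·)` convex non-decreasing, vanishing at `0`, with right derivative in `[0,1]`,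
the function `W` satisfies `0 ≤ W(q) ≤ q`, is convex and non-decreasing on `[0,∞)`,
`W 0 = 0`, its one-sided derivatives are obtained by differentiating under the
integral, and `D⁺W(q) → 1` as `q → ∞` provided `D⁺h(ω,·) → 1` a.e. -/
theorem deriv_under_integral_convex
    {Ω : Type*} {m0 : MeasurableSpace Ω} (μ : Measure Ω) [IsProbabilityMeasure μ]
    (Q : Ω → ℝ) (hQmeas : Measurable Q) (hQpos : ∀ ω, 0 < Q ω)
    (h : Ω → ℝ → ℝ)
    (hmeas : Measurable fun p : Ω × ℝ => h p.1 p.2)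
    (hnn : ∀ᵐ ω ∂μ, ∀ r : ℝ, 0 ≤ r → 0 ≤ h ω r)
    (hconv : ∀ᵐ ω ∂μ, ConvexOn ℝ (Set.Ici 0) (h ω))
    (hmono : ∀ᵐ ω ∂μ, MonotoneOn (h ω) (Set.Ici 0))
    (h0 : ∀ᵐ ω ∂μ, h ω 0 = 0)
    (hD : ∀ᵐ ω ∂μ, ∀ r : ℝ, 0 ≤ r → 0 ≤ rightD (h ω) r ∧ rightD (h ω) r ≤ 1) :
    (∀ q : ℝ, 0 ≤ q →
      0 ≤ (∫ ω, h ω (q * Q ω) / Q ω ∂μ) ∧ (∫ ω, h ω (q * Q ω) / Q ω ∂μ) ≤ q) ∧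
    ConvexOn ℝ (Set.Ici 0) (fun q : ℝ => ∫ ω, h ω (q * Q ω) / Q ω ∂μ) ∧
    MonotoneOn (fun q : ℝ => ∫ ω, h ω (q * Q ω) / Q ω ∂μ) (Set.Ici 0) ∧
    (∫ ω, h ω (0 * Q ω) / Q ω ∂μ) = 0 ∧
    (∀ q : ℝ, 0 ≤ q →
      rightD (fun q' : ℝ => ∫ ω, h ω (q' * Q ω) / Q ω ∂μ) q
        = ∫ ω, rightD (h ω) (q * Q ω) ∂μ) ∧
    (∀ q : ℝ, 0 < q →
      leftD (fun q' : ℝ => ∫ ω, h ω (q' * Q ω) / Q ω ∂μ) q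
        = ∫ ω, leftD (h ω) (q * Q ω) ∂μ) ∧
    ((∀ᵐ ω ∂μ, Filter.Tendsto (fun r : ℝ => rightD (h ω) r) Filter.atTop (nhds 1)) →
      Filter.Tendsto (fun q : ℝ => rightD (fun q' : ℝ => ∫ ω, h ω (q' * Q ω) / Q ω ∂μ) q)
        Filter.atTop (nhds 1)) :=
  deriv_under_integral_convex_general (m0 := m0) μ Q hQmeas hQpos h hmeas hconv hmono h0 hD
end
end

section
/- Let f : ℝ → [0,∞] be a lower semicontinuous, convex, non-decreasing function with f(0) = 0, f(1) < ∞, and f(p) = +∞ for all p > 1. Then f^♯(q) is finite and non-negative for every q ≥ 0, f^♯(q') − f^♯(q) ≤ q' − q whenever 0 ≤ q ≤ q' (equivalently q ↦ q − f^♯(q) is non-decreasing on [0,∞)), and lim_{q→∞}(q − f^♯(q)) = sup_{q ≥ 0}(q − f^♯(q)) = f(1). -/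
open scoped Classical
noncomputable section

/-! For `q ≥ 0` only slopes `p ≤ 1` contribute to `f^♯ q`, and raising `q` to `q'` raises each
`p q - f p` with `p ≤ 1` by at most `q' - q`: this is the 1-Lipschitz bound, and with `f ≥ 0` it
gives `f^♯ q ≤ q`. The slopes `p = 0` and `p = 1` give `0 ≤ f^♯ q` and `q - f^♯ q ≤ f 1`.
Conversely, if `c < f 1` then lower semicontinuity gives `c < f` on some `(l, 1]`, so
`f^♯ q ≤ max (l q) (q - c) = q - c` for large `q`. Hence the non-decreasing function
`q ↦ q - f^♯ q` has supremum, and limit, `f 1`. -/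

open Filter Set Topology

theorem MonotoneOn.tendsto_atTop_iSup_Ici {α β : Type*} [LinearOrder α] [CompleteLattice β]
    [TopologicalSpace β] [SupConvergenceClass β] {g : α → β} {a : α}
    (hg : MonotoneOn g (Ici a)) : Tendsto g atTop (𝓝 (⨆ x : {x // a ≤ x}, g x)) := by
  have hmono : Monotone fun x => g (max x a) := fun x y hxy =>
    hg (le_max_right x a) (le_max_right y a) (max_le_max hxy le_rfl)
  have hsup : (⨆ x, g (max x a)) = ⨆ x : {x // a ≤ x}, g x :=
    le_antisymm (iSup_le fun x => le_iSup_of_le ⟨max x a, le_max_right x a⟩ le_rfl)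
      (iSup_le fun x => le_iSup_of_le x.1 (by rw [max_eq_left x.2]))
  refine hsup ▸ (tendsto_atTop_iSup hmono).congr' ?_
  filter_upwards [eventually_ge_atTop a] with x hx
  rw [max_eq_left hx]

section fconj

variable {f : ℝ → EReal}

theorem le_fconj (p q : ℝ) : ((p * q : ℝ) : EReal) - f p ≤ fconj f q :=
  le_iSup (fun p : ℝ => ((p * q : ℝ) : EReal) - f p) p

theorem fconj_nonneg (hf0 : f 0 = 0) (q : ℝ) : 0 ≤ fconj f q := by
  simpa [hf0] using le_fconj (f := f) 0 q

theorem fconj_ne_bot (hf0 : f 0 = 0) (q : ℝ) : fconj f q ≠ ⊥ :=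
  (EReal.bot_lt_zero.trans_le (fconj_nonneg hf0 q)).ne'

theorem fconj_le_of_forall_le_one (htop : ∀ p : ℝ, 1 < p → f p = ⊤) {q : ℝ} {b : EReal}
    (h : ∀ p ≤ 1, ((p * q : ℝ) : EReal) - f p ≤ b) : fconj f q ≤ b :=
  iSup_le fun p => (le_or_gt p 1).elim (h p) fun hp => by simp [htop p hp]

theorem fconj_le_fconj_add (htop : ∀ p : ℝ, 1 < p → f p = ⊤) {q q' : ℝ} (hqq' : q ≤ q') :
    fconj f q' ≤ fconj f q + ((q' - q : ℝ) : EReal) :=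
  fconj_le_of_forall_le_one htop fun p hp => by
    have hslope : p * (q' - q) ≤ q' - q := by nlinarith
    calc ((p * q' : ℝ) : EReal) - f p
        = ((p * q : ℝ) : EReal) - f p + ((p * (q' - q) : ℝ) : EReal) := by
          rw [sub_eq_add_neg, sub_eq_add_neg, add_right_comm, ← EReal.coe_add]
          ring_nf
      _ ≤ fconj f q + ((q' - q : ℝ) : EReal) :=
          add_le_add (le_fconj p q) (EReal.coe_le_coe_iff.2 hslope)

theorem fconj_zero_nonpos (hpos : ∀ p, 0 ≤ f p) : fconj f 0 ≤ 0 :=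
  iSup_le fun p => by simpa using hpos p

theorem fconj_le_self (hpos : ∀ p, 0 ≤ f p) (htop : ∀ p : ℝ, 1 < p → f p = ⊤) {q : ℝ}
    (hq : 0 ≤ q) : fconj f q ≤ q :=
  calc fconj f q ≤ fconj f 0 + ((q - 0 : ℝ) : EReal) := fconj_le_fconj_add htop hq
    _ ≤ 0 + ((q - 0 : ℝ) : EReal) := add_le_add (fconj_zero_nonpos hpos) le_rfl
    _ = q := by simp

theorem fconj_ne_top (hpos : ∀ p, 0 ≤ f p) (htop : ∀ p : ℝ, 1 < p → f p = ⊤) {q : ℝ}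
    (hq : 0 ≤ q) : fconj f q ≠ ⊤ :=
  ((fconj_le_self hpos htop hq).trans_lt (EReal.coe_lt_top q)).ne

theorem monotoneOn_sub_fconj (hpos : ∀ p, 0 ≤ f p) (hf0 : f 0 = 0)
    (htop : ∀ p : ℝ, 1 < p → f p = ⊤) :
    MonotoneOn (fun q : ℝ => (q : EReal) - fconj f q) (Ici 0) := by
  intro q hq q' _ hqq'
  obtain ⟨r, hr⟩ : ∃ r : ℝ, fconj f q = r :=
    ⟨_, (EReal.coe_toReal (fconj_ne_top hpos htop hq) (fconj_ne_bot hf0 q)).symm⟩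
  have hlip := fconj_le_fconj_add htop hqq'
  rw [hr] at hlip
  simp only [hr]
  rw [EReal.le_sub_iff_add_le (.inr (EReal.coe_ne_bot q')) (.inr (EReal.coe_ne_top q'))]
  calc (q : EReal) - r + fconj f q' ≤ ((q - r : ℝ) : EReal) + ((r + (q' - q) : ℝ) : EReal) :=
        add_le_add le_rfl (by exact_mod_cast hlip)
    _ = q' := by norm_cast; ring

theorem sub_fconj_le (hpos : ∀ p, 0 ≤ f p) (hfin : f 1 ≠ ⊤) (q : ℝ) :
    (q : EReal) - fconj f q ≤ f 1 := by
  have hbot : f 1 ≠ ⊥ := (EReal.bot_lt_zero.trans_le (hpos 1)).ne'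
  have h := le_fconj (f := f) 1 q
  rw [one_mul, EReal.sub_le_iff_le_add (.inl hbot) (.inl hfin)] at h
  exact EReal.sub_le_of_le_add' h

theorem fconj_le_max_of_le_on_Ioc (hpos : ∀ p, 0 ≤ f p) (htop : ∀ p : ℝ, 1 < p → f p = ⊤)
    {l a q : ℝ} (ha : ∀ p ∈ Ioc l 1, (a : EReal) ≤ f p) (hq : 0 ≤ q) :
    fconj f q ≤ ((max (l * q) (q - a) : ℝ) : EReal) := by
  refine fconj_le_of_forall_le_one htop fun p hp1 => ?_
  rcases le_or_gt p l with hpl | hlp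
  · calc ((p * q : ℝ) : EReal) - f p ≤ ((p * q : ℝ) : EReal) - 0 :=
          EReal.sub_le_sub le_rfl (hpos p)
      _ ≤ ((max (l * q) (q - a) : ℝ) : EReal) := by
          rw [sub_zero, EReal.coe_le_coe_iff]
          exact le_max_of_le_left (mul_le_mul_of_nonneg_right hpl hq)
  · calc ((p * q : ℝ) : EReal) - f p ≤ ((p * q : ℝ) : EReal) - a :=
          EReal.sub_le_sub le_rfl (ha p ⟨hlp, hp1⟩)
      _ ≤ ((max (l * q) (q - a) : ℝ) : EReal) := by
          rw [← EReal.coe_sub, EReal.coe_le_coe_iff]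
          exact le_max_of_le_right (by nlinarith)

theorem exists_lt_sub_fconj (hpos : ∀ p, 0 ≤ f p) (hlsc : LowerSemicontinuous f)
    (htop : ∀ p : ℝ, 1 < p → f p = ⊤) {w : EReal} (hw : w < f 1) :
    ∃ q : ℝ, 0 ≤ q ∧ w < (q : EReal) - fconj f q := by
  obtain ⟨c, hwc, hc⟩ := EReal.lt_iff_exists_real_btwn.1 hw
  obtain ⟨l, hl1, hl⟩ := exists_Ioc_subset_of_mem_nhds (hlsc 1 c hc) ⟨0, one_pos⟩
  set q := max 0 (c / (1 - l))
  have hq : 0 ≤ q := le_max_left _ _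
  have hcq : c ≤ (1 - l) * q := by
    rw [← div_le_iff₀' (by linarith)]
    exact le_max_right _ _
  have hF := fconj_le_max_of_le_on_Ioc hpos htop (fun p hp => (hl hp).le) hq
  refine ⟨q, hq, hwc.trans_le ?_⟩
  calc (c : EReal) = (q : EReal) - ((q - c : ℝ) : EReal) := by norm_cast; ring_nf
    _ ≤ (q : EReal) - fconj f q :=
        EReal.sub_le_sub le_rfl (hF.trans (EReal.coe_le_coe_iff.2 (max_le (by linarith) le_rfl)))

end fconj

theorem conj_one_lipschitz_and_limit_general
    (f : ℝ → EReal) (hpos : ∀ p, 0 ≤ f p) (hlsc : LowerSemicontinuous f)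
    (hf0 : f 0 = 0) (hfin : f 1 ≠ ⊤)
    (htop : ∀ p : ℝ, 1 < p → f p = ⊤) :
    (∀ q : ℝ, 0 ≤ q → 0 ≤ fconj f q ∧ fconj f q ≠ ⊤) ∧
    (∀ q q' : ℝ, 0 ≤ q → q ≤ q' → fconj f q' - fconj f q ≤ ((q' - q : ℝ) : EReal)) ∧
    MonotoneOn (fun q : ℝ => (q : EReal) - fconj f q) (Set.Ici (0 : ℝ)) ∧
    Filter.Tendsto (fun q : ℝ => (q : EReal) - fconj f q) Filter.atTop (nhds (f 1)) ∧
    (⨆ q : {q : ℝ // 0 ≤ q}, ((q.1 : EReal) - fconj f q.1)) = f 1 := by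
  have hsup : (⨆ q : {q : ℝ // 0 ≤ q}, ((q.1 : EReal) - fconj f q.1)) = f 1 :=
    iSup_eq_of_forall_le_of_forall_lt_exists_gt (fun q => sub_fconj_le hpos hfin q.1)
      fun w hw =>
        let ⟨q, hq, hwq⟩ := exists_lt_sub_fconj hpos hlsc htop hw
        ⟨⟨q, hq⟩, hwq⟩
  have hmono := monotoneOn_sub_fconj hpos hf0 htop
  exact ⟨fun q hq => ⟨fconj_nonneg hf0 q, fconj_ne_top hpos htop hq⟩,
    fun q q' _ hqq' => EReal.sub_le_of_le_add' (fconj_le_fconj_add htop hqq'),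
    hmono, hsup ▸ hmono.tendsto_atTop_iSup_Ici, hsup⟩

/-- **1-Lipschitz monotone behavior of the conjugate**: for `f` lsc, convex,
non-decreasing, with `f 0 = 0`, `f 1 < ∞` and `f = +∞` on `(1,∞)`, the conjugate
`f^♯` is finite and non-negative on `[0,∞)`, satisfies
`f^♯(q') - f^♯(q) ≤ q' - q` for `0 ≤ q ≤ q'` (equivalently `q ↦ q - f^♯(q)` is
non-decreasing on `[0,∞)`), and `lim_{q→∞}(q - f^♯(q)) = sup_{q ≥ 0}(q - f^♯(q)) = f 1`. -/
theorem conj_one_lipschitz_and_limit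
    (f : ℝ → EReal) (hpos : ∀ p, 0 ≤ f p) (hlsc : LowerSemicontinuous f)
    (hconv : ConvexE f) (hmono : Monotone f) (hf0 : f 0 = 0) (hfin : f 1 ≠ ⊤)
    (htop : ∀ p : ℝ, 1 < p → f p = ⊤) :
    (∀ q : ℝ, 0 ≤ q → 0 ≤ fconj f q ∧ fconj f q ≠ ⊤) ∧
    (∀ q q' : ℝ, 0 ≤ q → q ≤ q' → fconj f q' - fconj f q ≤ ((q' - q : ℝ) : EReal)) ∧
    MonotoneOn (fun q : ℝ => (q : EReal) - fconj f q) (Set.Ici (0 : ℝ)) ∧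
    Filter.Tendsto (fun q : ℝ => (q : EReal) - fconj f q) Filter.atTop (nhds (f 1)) ∧
    (⨆ q : {q : ℝ // 0 ≤ q}, ((q.1 : EReal) - fconj f q.1)) = f 1 :=
  conj_one_lipschitz_and_limit_general f hpos hlsc hf0 hfin htop
end
end
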